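/- arXiv:1608.00483 — 2 statements merged into one kernel-verified Lean document; each statement's English description precedes it below -/
import Mathlib

section
/- For every pointed pair (K,L,⋆) of Kan complexes, the relative homotopy group π_n(K,L,⋆) is a well-defined set for n ≥ 1, a well-defined group for n ≥ 2 (the product being independent of all choices, with identity [⋆], inverses, and associativity), and this group is abelian for n ≥ 3; moreover the construction is functorial in maps of pointed pairs of Kan complexes. -/
/-- A simplicial set, given combinatorially by sets of `n`-simplices together with
face operators `d i : K_{n+1} → K_n` (`i ≤ n+1`) and degeneracy operators
`s i : K_n → K_{n+1}` (`i ≤ n`) satisfying the simplicial identities.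
(The operators are indexed by natural numbers; their values at out-of-range
indices are irrelevant.) -/
structure SSetC where
  obj : ℕ → Type
  d : (n : ℕ) → ℕ → obj (n + 1) → obj n
  s : (n : ℕ) → ℕ → obj n → obj (n + 1)
  dd : ∀ (n i j : ℕ), i < j → j ≤ n + 2 → ∀ x : obj (n + 2),
      d n i (d (n + 1) j x) = d n (j - 1) (d (n + 1) i x)
  ss : ∀ (n i j : ℕ), i ≤ j → j ≤ n → ∀ x : obj n,
      s (n + 1) i (s n j x) = s (n + 1) (j + 1) (s n i x)
  ds_lt : ∀ (n i j : ℕ), i < j → j ≤ n + 1 → ∀ x : obj (n + 1),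
      d (n + 1) i (s (n + 1) j x) = s n (j - 1) (d n i x)
  ds_self : ∀ (n i : ℕ), i ≤ n → ∀ x : obj n, d n i (s n i x) = x
  ds_succ : ∀ (n i : ℕ), i ≤ n → ∀ x : obj n, d n (i + 1) (s n i x) = x
  ds_gt : ∀ (n i j : ℕ), j + 1 < i → i ≤ n + 2 → ∀ x : obj (n + 1),
      d (n + 1) i (s (n + 1) j x) = s n j (d n (i - 1) x)

namespace SSetC

variable (K : SSetC)

/-- The boundary `∂x = (d_0 x, …, d_{m+1} x)` of an `(m+1)`-simplex. -/
def bdry {m : ℕ} (x : K.obj (m + 1)) : Fin (m + 2) → K.obj m := fun i => K.d m i x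

/-- An `(m+2)`-tuple of `m`-simplices is an `m`-boundary if it is the boundary of
some `(m+1)`-simplex. -/
def IsBoundary {m : ℕ} (c : Fin (m + 2) → K.obj m) : Prop :=
  ∃ x : K.obj (m + 1), K.bdry x = c

/-- An `(m+2)`-tuple of `m`-simplices is compatible (an `m`-cycle) if
`d_i x_j = d_{j-1} x_i` for all `i < j` (a vacuous condition for `m = 0`). -/
def Compat : ∀ {m : ℕ}, (Fin (m + 2) → K.obj m) → Prop
  | 0 => fun _ => True
  | m + 1 => fun c => ∀ i j : Fin (m + 3), (i : ℕ) < (j : ℕ) →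
      K.d m i (c j) = K.d m ((j : ℕ) - 1) (c i)

/-- Compatibility of an `(m,k)`-horn: the entry at position `k` is disregarded. -/
def HornCompat : ∀ {m : ℕ}, ℕ → (Fin (m + 2) → K.obj m) → Prop
  | 0 => fun _ _ => True
  | m + 1 => fun k c => ∀ i j : Fin (m + 3), (i : ℕ) ≠ k → (j : ℕ) ≠ k → (i : ℕ) < (j : ℕ) →
      K.d m i (c j) = K.d m ((j : ℕ) - 1) (c i)

/-- A simplicial set is a Kan complex if every horn has a filling. -/
def IsKan : Prop :=
  ∀ (m k : ℕ), k ≤ m + 1 → ∀ c : Fin (m + 2) → K.obj m, K.HornCompat k c →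
    ∃ x : K.obj (m + 1), ∀ i : Fin (m + 2), (i : ℕ) ≠ k → K.d m i x = c i

/-- The cycle `(s_{n-1} d_0 x, …, s_{n-1} d_{n-1} x, x, y)` used to define homotopy
of `n`-simplices (for `n = 0` it is just `(x, y)`). -/
def homotopyTuple : ∀ {n : ℕ}, K.obj n → K.obj n → Fin (n + 2) → K.obj n
  | 0 => fun x y => ![x, y]
  | n + 1 => fun x y i =>
      if (i : ℕ) < n + 1 then K.s n n (K.d n i x)
      else if (i : ℕ) = n + 1 then x else y

/-- Two `n`-simplices (with the same boundary) are homotopic if the corresponding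
cycle is a boundary. -/
def Homotopic {n : ℕ} (x y : K.obj n) : Prop :=
  K.IsBoundary (K.homotopyTuple x y)

/-- `∂x = ∂y` (a vacuous condition for vertices). -/
def SameBdry : ∀ {n : ℕ}, K.obj n → K.obj n → Prop
  | 0 => fun _ _ => True
  | _ + 1 => fun x y => K.bdry x = K.bdry y

/-- The simplex `⋆_n` of the subcomplex generated by a base point. -/
def basept (b : K.obj 0) : ∀ n : ℕ, K.obj n
  | 0 => b
  | n + 1 => K.s n 0 (basept b n)

lemma basept_succ (b : K.obj 0) (n : ℕ) : K.basept b (n + 1) = K.s n 0 (K.basept b n) := rfl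

lemma s_basept (b : K.obj 0) : ∀ n i : ℕ, i ≤ n → K.s n i (K.basept b n) = K.basept b (n + 1) := by
  intro n
  induction n with
  | zero => intro i hi; interval_cases i; rfl
  | succ n ih =>
    intro i hi
    match i, hi with
    | 0, _ => rfl
    | (i + 1), hi =>
      have h1 : K.basept b (n + 1) = K.s n 0 (K.basept b n) := rfl
      rw [h1, ← K.ss n 0 i (Nat.zero_le _) (by omega), ih i (by omega)]
      exact (K.basept_succ b (n + 1)).symm

lemma d_basept (b : K.obj 0) : ∀ n i : ℕ, i ≤ n + 1 → K.d n i (K.basept b (n + 1)) = K.basept b n := by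
  intro n
  induction n with
  | zero =>
    intro i hi
    interval_cases i
    · exact K.ds_self 0 0 (le_refl 0) b
    · exact K.ds_succ 0 0 (le_refl 0) b
  | succ n ih =>
    intro i hi
    match i, hi with
    | 0, _ => exact K.ds_self (n + 1) 0 (Nat.zero_le _) _
    | 1, _ => exact K.ds_succ (n + 1) 0 (Nat.zero_le _) _
    | (i + 2), hi =>
      have h1 : K.basept b (n + 1 + 1) = K.s (n + 1) 0 (K.basept b (n + 1)) := rfl
      rw [h1, K.ds_gt n (i + 2) 0 (by omega) (by omega)]
      show K.s n 0 (K.d n (i + 1) (K.basept b (n + 1))) = _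
      rw [ih (i + 1) (by omega), K.s_basept b n 0 (Nat.zero_le _)]

/-- An `(m+1)`-simplex is spherical if all of its faces are the base point. -/
def IsSph (b : K.obj 0) {m : ℕ} (x : K.obj (m + 1)) : Prop :=
  ∀ i : Fin (m + 2), K.d m i x = K.basept b m

/-- Sphericality for simplices of arbitrary dimension (vacuous for vertices). -/
def IsSph' (b : K.obj 0) : ∀ {n : ℕ}, K.obj n → Prop
  | 0 => fun _ => True
  | _ + 1 => fun x => K.IsSph b x

lemma basept_isSph (b : K.obj 0) (m : ℕ) : K.IsSph b (K.basept b (m + 1)) :=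
  fun i => K.d_basept b m i (Nat.lt_succ_iff.mp i.isLt)

/-- The cycle `(⋆, …, ⋆, y, z, x)` witnessing `[x][y] = [z]` in `π_{m+1}`. -/
def mulTuple (b : K.obj 0) {m : ℕ} (x y z : K.obj (m + 1)) : Fin (m + 3) → K.obj (m + 1) :=
  fun i =>
    if (i : ℕ) < m then K.basept b (m + 1)
    else if (i : ℕ) = m then y
    else if (i : ℕ) = m + 1 then z
    else x

/-- `z` is a product of `x` and `y` in the sense of the homotopy group `π_{m+1}`. -/
def MulWitness (b : K.obj 0) {m : ℕ} (x y z : K.obj (m + 1)) : Prop :=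
  K.IsBoundary (K.mulTuple b x y z)

/-- Spherical `(m+1)`-simplices: the representatives of `π_{m+1}(K,⋆)`. -/
def Sph (b : K.obj 0) (m : ℕ) := {x : K.obj (m + 1) // K.IsSph b x}

/-- The homotopy group `π_{m+1}(K,⋆)` as a quotient set. -/
def piGrp (b : K.obj 0) (m : ℕ) := Quot (fun x y : K.Sph b m => K.Homotopic x.1 y.1)

/-- The homotopy class of a spherical simplex. -/
def cls (b : K.obj 0) (m : ℕ) (x : K.Sph b m) : K.piGrp b m := Quot.mk _ x

/-- A binary operation on `π_{m+1}(K,⋆)` is induced by horn filling if it sends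
classes of `x` and `y` to the class of any product witness `z`. -/
def MulDescends (b : K.obj 0) (m : ℕ) (mul : K.piGrp b m → K.piGrp b m → K.piGrp b m) : Prop :=
  ∀ x y z : K.Sph b m, K.MulWitness b x.1 y.1 z.1 → mul (K.cls b m x) (K.cls b m y) = K.cls b m z

/-- A Kan complex is minimal if homotopic simplices with equal boundaries are equal. -/
def Minimal : Prop :=
  ∀ (n : ℕ) (x y : K.obj n), K.SameBdry x y → K.Homotopic x y → x = y

end SSetC
namespace SSetC

variable (K : SSetC)

/-- A subcomplex of a simplicial set: a family of subsets closed under the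
face and degeneracy operators. -/
structure Subcomplex (K : SSetC) where
  mem : ∀ n, Set (K.obj n)
  d_mem : ∀ (n i : ℕ), i ≤ n + 1 → ∀ x ∈ mem (n + 1), K.d n i x ∈ mem n
  s_mem : ∀ (n i : ℕ), i ≤ n → ∀ x ∈ mem n, K.s n i x ∈ mem (n + 1)

/-- The subcomplex `L` is itself a Kan complex: every horn with entries in `L`
has a filling lying in `L`. -/
def Subcomplex.IsKan {K : SSetC} (L : Subcomplex K) : Prop :=
  ∀ (m k : ℕ), k ≤ m + 1 → ∀ c : Fin (m + 2) → K.obj m,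
    (∀ i : Fin (m + 2), (i : ℕ) ≠ k → c i ∈ L.mem m) → K.HornCompat k c →
    ∃ x : K.obj (m + 1), x ∈ L.mem (m + 1) ∧ ∀ i : Fin (m + 2), (i : ℕ) ≠ k → K.d m i x = c i

/-- A tuple of `m`-simplices lying in a subcomplex is a boundary in the subcomplex
if it is the boundary of a simplex of the subcomplex. -/
def IsBoundaryIn (L : Subcomplex K) {m : ℕ} (c : Fin (m + 2) → K.obj m) : Prop :=
  ∃ x ∈ L.mem (m + 1), K.bdry x = c

/-- Homotopy of simplices realized inside a subcomplex. -/
def HomotopicIn (L : Subcomplex K) {n : ℕ} (x y : K.obj n) : Prop :=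
  K.IsBoundaryIn L (K.homotopyTuple x y)

/-- The cycle `(h_L, s_m d_1 x, …, s_m d_m x, x, y)` used to define relative homotopy. -/
def relTuple {m : ℕ} (hL x y : K.obj (m + 1)) : Fin (m + 3) → K.obj (m + 1) :=
  fun i =>
    if (i : ℕ) = 0 then hL
    else if (i : ℕ) < m + 1 then K.s m m (K.d m i x)
    else if (i : ℕ) = m + 1 then x
    else y

/-- Two `(m+1)`-simplices are homotopic relative to a subcomplex `L`. -/
def HomotopicRel (L : Subcomplex K) {m : ℕ} (x y : K.obj (m + 1)) : Prop :=
  (∀ i : ℕ, 1 ≤ i → i ≤ m + 1 → K.d m i x = K.d m i y) ∧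
  K.d m 0 x ∈ L.mem m ∧ K.d m 0 y ∈ L.mem m ∧
  ∃ hL ∈ L.mem (m + 1), K.IsBoundary (K.relTuple hL x y)

/-- Representatives of the relative homotopy group `π_{m+1}(K,L,⋆)`:
`∂x = (l, ⋆, …, ⋆)` with `l ∈ L`. -/
def IsRelSph (L : Subcomplex K) (b : K.obj 0) {m : ℕ} (x : K.obj (m + 1)) : Prop :=
  K.d m 0 x ∈ L.mem m ∧ ∀ i : Fin (m + 2), 1 ≤ (i : ℕ) → K.d m i x = K.basept b m

def RelSph (L : Subcomplex K) (b : K.obj 0) (m : ℕ) := {x : K.obj (m + 1) // K.IsRelSph L b x}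

/-- The relative homotopy group `π_{m+1}(K,L,⋆)` as a quotient set. -/
def piRel (L : Subcomplex K) (b : K.obj 0) (m : ℕ) :=
  Quot (fun x y : K.RelSph L b m => K.HomotopicRel L x.1 y.1)

def relCls (L : Subcomplex K) (b : K.obj 0) (m : ℕ) (x : K.RelSph L b m) : K.piRel L b m :=
  Quot.mk _ x

/-- The cycle `(h, ⋆, …, ⋆, y, z, x)` (with `h ∈ L`) witnessing `[x][y] = [z]` in
the relative homotopy group `π_{m+2}(K,L,⋆)`. -/
def relMulTuple (b : K.obj 0) {m : ℕ} (h x y z : K.obj (m + 2)) : Fin (m + 4) → K.obj (m + 2) :=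
  fun i =>
    if (i : ℕ) = 0 then h
    else if (i : ℕ) < m + 1 then K.basept b (m + 2)
    else if (i : ℕ) = m + 1 then y
    else if (i : ℕ) = m + 2 then z
    else x

def RelMulWitness (L : Subcomplex K) (b : K.obj 0) {m : ℕ} (x y z : K.obj (m + 2)) : Prop :=
  ∃ h ∈ L.mem (m + 2), K.IsBoundary (K.relMulTuple b h x y z)

def RelMulDescends (L : Subcomplex K) (b : K.obj 0) (m : ℕ)
    (mul : K.piRel L b (m + 1) → K.piRel L b (m + 1) → K.piRel L b (m + 1)) : Prop :=
  ∀ x y z : K.RelSph L b (m + 1), K.RelMulWitness L b x.1 y.1 z.1 →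
    mul (K.relCls L b (m + 1) x) (K.relCls L b (m + 1) y) = K.relCls L b (m + 1) z

/-- The subcomplex generated by a base point. -/
def ptSub (b : K.obj 0) : Subcomplex K where
  mem n := {x | x = K.basept b n}
  d_mem n i hi x hx := by
    simp only [Set.mem_setOf_eq] at *
    rw [hx]; exact K.d_basept b n i hi
  s_mem n i hi x hx := by
    simp only [Set.mem_setOf_eq] at *
    rw [hx]; exact K.s_basept b n i hi

/-- The full subcomplex. -/
def topSub : Subcomplex K where
  mem _ := Set.univ
  d_mem _ _ _ _ _ := trivial
  s_mem _ _ _ _ _ := trivial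

/-- The empty subcomplex. -/
def botSub : Subcomplex K where
  mem _ := ∅
  d_mem _ _ _ _ h := h.elim
  s_mem _ _ _ _ h := h.elim

/-- A simplicial map between simplicial sets. -/
structure SMap (K L : SSetC) where
  app : ∀ n, K.obj n → L.obj n
  comm_d : ∀ (n i : ℕ), i ≤ n + 1 → ∀ x : K.obj (n + 1), app n (K.d n i x) = L.d n i (app (n + 1) x)
  comm_s : ∀ (n i : ℕ), i ≤ n → ∀ x : K.obj n, app (n + 1) (K.s n i x) = L.s n i (app n x)

/-- The identity simplicial map. -/
def SMap.idMap (K : SSetC) : SMap K K :=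
  ⟨fun _ x => x, fun _ _ _ _ => rfl, fun _ _ _ _ => rfl⟩

/-- Composition of simplicial maps. -/
def SMap.comp {K L M : SSetC} (f : SMap K L) (g : SMap L M) : SMap K M where
  app n x := g.app n (f.app n x)
  comm_d n i hi x := by (try dsimp only); rw [f.comm_d n i hi, g.comm_d n i hi]
  comm_s n i hi x := by (try dsimp only); rw [f.comm_s n i hi, g.comm_s n i hi]

lemma SMap.basept_app {K L : SSetC} (f : SMap K L) (b : K.obj 0) :
    ∀ n, f.app n (K.basept b n) = L.basept (f.app 0 b) n := by
  intro n
  induction n with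
  | zero => rfl
  | succ n ih =>
    have h1 : K.basept b (n + 1) = K.s n 0 (K.basept b n) := rfl
    rw [h1, f.comm_s n 0 (Nat.zero_le _), ih]
    rfl

/-- The product of two simplicial sets. -/
def prodSSet (K L : SSetC) : SSetC where
  obj n := K.obj n × L.obj n
  d n i x := (K.d n i x.1, L.d n i x.2)
  s n i x := (K.s n i x.1, L.s n i x.2)
  dd n i j h1 h2 x := Prod.ext (K.dd n i j h1 h2 x.1) (L.dd n i j h1 h2 x.2)
  ss n i j h1 h2 x := Prod.ext (K.ss n i j h1 h2 x.1) (L.ss n i j h1 h2 x.2)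
  ds_lt n i j h1 h2 x := Prod.ext (K.ds_lt n i j h1 h2 x.1) (L.ds_lt n i j h1 h2 x.2)
  ds_self n i h x := Prod.ext (K.ds_self n i h x.1) (L.ds_self n i h x.2)
  ds_succ n i h x := Prod.ext (K.ds_succ n i h x.1) (L.ds_succ n i h x.2)
  ds_gt n i j h1 h2 x := Prod.ext (K.ds_gt n i j h1 h2 x.1) (L.ds_gt n i j h1 h2 x.2)

/-- The product of a family of simplicial sets. -/
def piSSet {I : Type} (F : I → SSetC) : SSetC where
  obj n := ∀ i, (F i).obj n
  d n j x := fun i => (F i).d n j (x i)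
  s n j x := fun i => (F i).s n j (x i)
  dd n i j h1 h2 x := funext fun a => (F a).dd n i j h1 h2 (x a)
  ss n i j h1 h2 x := funext fun a => (F a).ss n i j h1 h2 (x a)
  ds_lt n i j h1 h2 x := funext fun a => (F a).ds_lt n i j h1 h2 (x a)
  ds_self n i h x := funext fun a => (F a).ds_self n i h (x a)
  ds_succ n i h x := funext fun a => (F a).ds_succ n i h (x a)
  ds_gt n i j h1 h2 x := funext fun a => (F a).ds_gt n i j h1 h2 (x a)

/-- The coproduct (disjoint union) of a family of simplicial sets. -/
def sigmaSSet {I : Type} (F : I → SSetC) : SSetC where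
  obj n := Σ i, (F i).obj n
  d n j x := ⟨x.1, (F x.1).d n j x.2⟩
  s n j x := ⟨x.1, (F x.1).s n j x.2⟩
  dd n i j h1 h2 x := congrArg (Sigma.mk x.1) ((F x.1).dd n i j h1 h2 x.2)
  ss n i j h1 h2 x := congrArg (Sigma.mk x.1) ((F x.1).ss n i j h1 h2 x.2)
  ds_lt n i j h1 h2 x := congrArg (Sigma.mk x.1) ((F x.1).ds_lt n i j h1 h2 x.2)
  ds_self n i h x := congrArg (Sigma.mk x.1) ((F x.1).ds_self n i h x.2)
  ds_succ n i h x := congrArg (Sigma.mk x.1) ((F x.1).ds_succ n i h x.2)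
  ds_gt n i j h1 h2 x := congrArg (Sigma.mk x.1) ((F x.1).ds_gt n i j h1 h2 x.2)

/-- The one-point simplicial set. -/
def ptSSet : SSetC where
  obj _ := PUnit
  d _ _ _ := PUnit.unit
  s _ _ _ := PUnit.unit
  dd _ _ _ _ _ _ := rfl
  ss _ _ _ _ _ _ := rfl
  ds_lt _ _ _ _ _ _ := rfl
  ds_self _ _ _ _ := rfl
  ds_succ _ _ _ _ := rfl
  ds_gt _ _ _ _ _ _ := rfl

/-- The standard `1`-simplex `Δ¹`: an `n`-simplex is a monotone map `[n] → [1]`,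
encoded by the number `k ∈ {0, …, n+1}` of vertices sent to `0`. -/
def deltaOne : SSetC where
  obj n := Fin (n + 2)
  d n i k := ⟨if i < (k : ℕ) then (k : ℕ) - 1 else min (k : ℕ) (n + 1), by
    have := k.isLt; split_ifs <;> omega⟩
  s n i k := ⟨if i < (k : ℕ) then (k : ℕ) + 1 else (k : ℕ), by
    have := k.isLt; split_ifs <;> omega⟩
  dd := by
    intro n i j h1 h2 x
    apply Fin.ext
    have := x.isLt
    simp only []
    split_ifs <;> omega
  ss := by
    intro n i j h1 h2 x
    apply Fin.ext
    have := x.isLt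
    simp only []
    split_ifs <;> omega
  ds_lt := by
    intro n i j h1 h2 x
    apply Fin.ext
    have := x.isLt
    simp only []
    split_ifs <;> omega
  ds_self := by
    intro n i h x
    apply Fin.ext
    have := x.isLt
    simp only []
    split_ifs <;> omega
  ds_succ := by
    intro n i h x
    apply Fin.ext
    have := x.isLt
    simp only []
    split_ifs <;> omega
  ds_gt := by
    intro n i j h1 h2 x
    apply Fin.ext
    have := x.isLt
    simp only []
    split_ifs <;> omega

/-- The `0`-end of `Δ¹` in dimension `n` (all vertices sent to `0`). -/
def vertexZero (n : ℕ) : Fin (n + 2) := ⟨n + 1, by omega⟩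

/-- The `1`-end of `Δ¹` in dimension `n` (all vertices sent to `1`). -/
def vertexOne (n : ℕ) : Fin (n + 2) := ⟨0, by omega⟩

end SSetC
/-!
All constructions are horn fillings in `K` whose `0`-th entry is first obtained by filling,
inside `L`, the horn formed by the `0`-th faces of the other entries (`exists_padFaces_filler`).

The `(m+3)`-simplices with faces `(l, ⋆, …, ⋆, A, B, C, D)`, `l ∈ L`, behave like tetrahedra with
faces `A, B, C, D`: when five of them would fit together as the facets of a `4`-simplex, each one
but the first exists as soon as the other four do. A product witness `x·y = z` is the tetrahedron
`(⋆, y, z, x)` and a homotopy `x ≃ y` is `(⋆, ⋆, x, y)`, so uniqueness of products, independence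
of representatives and associativity are each a single such filling over the base face `⋆`.
For `m ≥ 1` the face `A` becomes visible too, and fillings through the degenerate tetrahedra
`(x, x, ⋆, ⋆)` move `x` from one side of a product to the other, which gives commutativity.
-/

namespace SSetC

section Filling

variable {K : SSetC} {L : Subcomplex K} {b : K.obj 0}

lemma basept_mem (hb : b ∈ L.mem 0) : ∀ n, K.basept b n ∈ L.mem n
  | 0 => hb
  | n + 1 => L.s_mem n 0 n.zero_le _ (basept_mem hb n)

lemma d_d_zero {n i : ℕ} (hi : i ≤ n + 1) (x : K.obj (n + 2)) :
    K.d n i (K.d (n + 1) 0 x) = K.d n 0 (K.d (n + 1) (i + 1) x) := by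
  simpa using (K.dd n 0 (i + 1) i.succ_pos (by omega) x).symm

lemma IsKan.fill (hK : K.IsKan) {n k : ℕ} (hk : k ≤ n + 2) (c : ℕ → K.obj (n + 1))
    (hc : ∀ i j, i < j → j ≤ n + 2 → i ≠ k → j ≠ k → K.d n i (c j) = K.d n (j - 1) (c i)) :
    ∃ x : K.obj (n + 2), ∀ i ≤ n + 2, i ≠ k → K.d (n + 1) i x = c i := by
  obtain ⟨x, hx⟩ := hK (n + 1) k hk (fun i => c i)
    fun i j hi hj hij => hc i j hij (by omega) hi hj
  exact ⟨x, fun i hi hik => hx ⟨i, by omega⟩ hik⟩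

lemma Subcomplex.IsKan.fill (hL : L.IsKan) {n k : ℕ} (hk : k ≤ n + 2) (c : ℕ → K.obj (n + 1))
    (hcL : ∀ i ≤ n + 2, i ≠ k → c i ∈ L.mem (n + 1))
    (hc : ∀ i j, i < j → j ≤ n + 2 → i ≠ k → j ≠ k → K.d n i (c j) = K.d n (j - 1) (c i)) :
    ∃ x ∈ L.mem (n + 2), ∀ i ≤ n + 2, i ≠ k → K.d (n + 1) i x = c i := by
  obtain ⟨x, hxL, hx⟩ := hL (n + 1) k hk (fun i => c i) (fun i hi => hcL i (by omega) hi)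
    fun i j hi hj hij => hc i j hij (by omega) hi hj
  exact ⟨x, hxL, fun i hi hik => hx ⟨i, by omega⟩ hik⟩

variable (K) in
def padFaces (b : K.obj 0) {n : ℕ} (o : ℕ) (f : ℕ → K.obj n) (i : ℕ) : K.obj n :=
  if i < o then K.basept b n else f (i - o)

variable (K L) in
def HasRelFaces {n : ℕ} (F : ℕ → K.obj n) (x : K.obj (n + 1)) : Prop :=
  K.d n 0 x ∈ L.mem n ∧ ∀ i, 1 ≤ i → i ≤ n + 1 → K.d n i x = F i

lemma HasRelFaces.congr {n : ℕ} {F G : ℕ → K.obj n} {x : K.obj (n + 1)}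
    (h : K.HasRelFaces L F x) (hFG : ∀ i, 1 ≤ i → i ≤ n + 1 → F i = G i) :
    K.HasRelFaces L G x :=
  ⟨h.1, fun i hi1 hi2 => (h.2 i hi1 hi2).trans (hFG i hi1 hi2)⟩

lemma HasRelFaces.congr_tail {n o : ℕ} {f g : ℕ → K.obj n} {x : K.obj (n + 1)}
    (h : K.HasRelFaces L (K.padFaces b o f) x) (hfg : ∀ a, o + a ≤ n + 1 → f a = g a) :
    K.HasRelFaces L (K.padFaces b o g) x :=
  h.congr fun i _ hi => by
    unfold padFaces
    split_ifs
    · rfl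
    · exact hfg _ (by omega)

/-- The `a`-th face of the `j`-th facet of a simplex, read off from the table `e` of its
codimension-two faces: `d_a Q_j = d_{j-1} Q_a = e a j` for `a < j`. -/
def ridge {α : Type*} (e : ℕ → ℕ → α) (j a : ℕ) : α :=
  if a < j then e a j else e j (a + 1)

variable (K L b) in
def IsPaddedHorn {N : ℕ} (o t : ℕ) (e : ℕ → ℕ → K.obj (N + 1)) (Q : ℕ → K.obj (N + 2)) : Prop :=
  ∀ j, o + j ≤ N + 3 → j ≠ t → K.HasRelFaces L (K.padFaces b o (ridge e j)) (Q j)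

variable {N o t : ℕ} {e : ℕ → ℕ → K.obj (N + 1)} {Q : ℕ → K.obj (N + 2)}

lemma padFaces_compat (hQ : K.IsPaddedHorn L b o t e Q) {i j : ℕ} (hi : 1 ≤ i) (hij : i < j)
    (hj : j ≤ N + 3) (hit : i ≠ o + t) (hjt : j ≠ o + t) :
    K.d (N + 1) i (K.padFaces b o Q j) = K.d (N + 1) (j - 1) (K.padFaces b o Q i) := by
  unfold padFaces
  by_cases hjo : j < o
  · rw [if_pos hjo, if_pos (hij.trans hjo), K.d_basept b _ _ (by omega),
      K.d_basept b _ _ (by omega)]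
  rw [if_neg hjo, (hQ (j - o) (by omega) (by omega)).2 i hi (by omega), padFaces]
  by_cases hio : i < o
  · rw [if_pos hio, if_pos hio, K.d_basept b _ _ (by omega)]
  rw [if_neg hio, if_neg hio, (hQ (i - o) (by omega) (by omega)).2 (j - 1) (by omega) (by omega),
    padFaces, if_neg (by omega), ridge, ridge, if_pos (by omega), if_neg (by omega)]
  congr 1
  omega

lemma exists_padFaces_filler (hK : K.IsKan) (hL : L.IsKan) (hb : b ∈ L.mem 0)
    (ht : 1 ≤ o + t) (hot : o + t ≤ N + 3)
    (hQ : K.IsPaddedHorn L b o t e Q) :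
    ∃ Ω : K.obj (N + 3), K.d (N + 2) 0 Ω ∈ L.mem (N + 2) ∧
      ∀ i, 1 ≤ i → i ≤ N + 3 → i ≠ o + t → K.d (N + 2) i Ω = K.padFaces b o Q i := by
  obtain ⟨H, hHL, hH⟩ := hL.fill (n := N) (k := o + t - 1) (by omega)
    (fun p => K.d (N + 1) 0 (K.padFaces b o Q (p + 1)))
    (fun p hp hpt => by
      unfold padFaces
      split_ifs
      · rw [K.d_basept b _ _ (by omega)]; exact basept_mem hb _
      · exact (hQ _ (by omega) (by omega)).1)
    (fun p q hpq hq hpt hqt => by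
      rw [d_d_zero (by omega), d_d_zero (by omega), Nat.sub_add_cancel (by omega : 1 ≤ q),
        padFaces_compat hQ (by omega) (by omega) (by omega) (by omega) (by omega),
        Nat.add_sub_cancel])
  obtain ⟨Ω, hΩ⟩ := hK.fill (n := N + 1) hot (fun i => if i = 0 then H else K.padFaces b o Q i)
    (fun i j hij hj hit hjt => by
      rw [if_neg (by omega)]
      split_ifs with hi0
      · rw [hi0, hH (j - 1) (by omega) (by omega), Nat.sub_add_cancel (by omega)]
      · exact padFaces_compat hQ (by omega) hij hj hit hjt)
  refine ⟨Ω, ?_, fun i hi1 hi2 hit => ?_⟩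
  · rw [hΩ 0 (by omega) (by omega), if_pos rfl]; exact hHL
  · rw [hΩ i hi2 hit, if_neg (by omega)]

lemma hasRelFaces_d_filler (ht : 1 ≤ o + t) (hot : o + t ≤ N + 3)
    (hQ : K.IsPaddedHorn L b o t e Q)
    {Ω : K.obj (N + 3)} (hΩ0 : K.d (N + 2) 0 Ω ∈ L.mem (N + 2))
    (hΩ : ∀ i, 1 ≤ i → i ≤ N + 3 → i ≠ o + t → K.d (N + 2) i Ω = K.padFaces b o Q i) :
    K.HasRelFaces L (K.padFaces b o (ridge e t)) (K.d (N + 2) (o + t) Ω) := by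
  refine ⟨?_, fun i hi1 hi2 => ?_⟩
  · rw [K.dd (N + 1) 0 (o + t) (by omega) hot Ω]
    exact L.d_mem _ _ (by omega) _ hΩ0
  by_cases hi : i < o + t
  · rw [K.dd (N + 1) i (o + t) hi hot Ω, hΩ i hi1 (by omega) (by omega)]
    unfold padFaces
    by_cases hio : i < o
    · rw [if_pos hio, if_pos hio, K.d_basept b _ _ (by omega)]
    rw [if_neg hio, if_neg hio, (hQ (i - o) (by omega) (by omega)).2 (o + t - 1) (by omega)
      (by omega), padFaces, if_neg (by omega), ridge, ridge, if_neg (by omega), if_pos (by omega)]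
    congr 1
    omega
  · have hdd := K.dd (N + 1) (o + t) (i + 1) (by omega) (by omega) Ω
    rw [Nat.add_sub_cancel] at hdd
    rw [← hdd, hΩ (i + 1) (by omega) (by omega) (by omega)]
    unfold padFaces
    rw [if_neg (by omega), if_neg (by omega), (hQ (i + 1 - o) (by omega) (by omega)).2 (o + t)
      (by omega) (by omega), padFaces, if_neg (by omega), ridge, ridge, if_pos (by omega),
      if_neg (by omega), show i + 1 - o = i - o + 1 by omega, Nat.add_sub_cancel_left]

lemma exists_hasRelFaces_ridge (hK : K.IsKan) (hL : L.IsKan) (hb : b ∈ L.mem 0)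
    (ht : 1 ≤ o + t) (hot : o + t ≤ N + 3)
    (hQ : K.IsPaddedHorn L b o t e Q) :
    ∃ X, K.HasRelFaces L (K.padFaces b o (ridge e t)) X :=
  let ⟨_, hΩ0, hΩ⟩ := exists_padFaces_filler hK hL hb ht hot hQ
  ⟨_, hasRelFaces_d_filler ht hot hQ hΩ0 hΩ⟩

end Filling

section Homotopy

variable {K : SSetC} {L : Subcomplex K} {b : K.obj 0}

lemma IsRelSph.d_eq {n i : ℕ} {x : K.obj (n + 1)} (hx : K.IsRelSph L b x) (hi1 : 1 ≤ i)
    (hi : i ≤ n + 1) : K.d n i x = K.basept b n :=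
  hx.2 ⟨i, by omega⟩ hi1

lemma isRelSph_iff {n : ℕ} {x : K.obj (n + 1)} :
    K.IsRelSph L b x ↔ K.HasRelFaces L (fun _ => K.basept b n) x :=
  ⟨fun hx => ⟨hx.1, fun _ hi1 hi => hx.d_eq hi1 hi⟩,
    fun hx => ⟨hx.1, fun i hi => hx.2 i hi (by omega)⟩⟩

lemma basept_isRelSph (hb : b ∈ L.mem 0) (n : ℕ) : K.IsRelSph L b (K.basept b (n + 1)) := by
  refine ⟨?_, fun i _ => K.d_basept b n i (by omega)⟩
  rw [K.d_basept b n 0 (by omega)]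
  exact basept_mem hb n

lemma hasRelFaces_s {n q : ℕ} {x : K.obj (n + 1)} (hx : K.IsRelSph L b x) (hq1 : 1 ≤ q)
    (hq : q ≤ n + 1) :
    K.HasRelFaces L (K.padFaces b q fun a => if a ≤ 1 then x else K.basept b (n + 1))
      (K.s (n + 1) q x) := by
  refine ⟨?_, fun i hi1 hi2 => ?_⟩
  · rw [K.ds_lt n 0 q (by omega) hq x]
    exact L.s_mem n (q - 1) (by omega) _ hx.1
  simp only [padFaces]
  rcases lt_trichotomy i q with h | rfl | h
  · rw [K.ds_lt n i q h hq x, hx.d_eq hi1 (by omega), K.s_basept b n _ (by omega), if_pos h]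
  · rw [K.ds_self (n + 1) i hq x, if_neg (lt_irrefl _), Nat.sub_self, if_pos zero_le_one]
  rcases (show i = q + 1 ∨ q + 1 < i by omega) with rfl | h'
  · rw [K.ds_succ (n + 1) q hq x, if_neg (by omega), if_pos (by omega)]
  · rw [K.ds_gt n i q h' hi2 x, hx.d_eq (by omega) (by omega), K.s_basept b n q (by omega),
      if_neg (by omega), if_neg (by omega)]

lemma exists_mem_isBoundary_iff {n : ℕ} {T : K.obj n → Fin (n + 2) → K.obj n}
    {F : ℕ → K.obj n} (hT0 : ∀ h, T h 0 = h)
    (hT : ∀ h i (hi : i < n + 2), 1 ≤ i → T h ⟨i, hi⟩ = F i) :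
    (∃ h ∈ L.mem n, K.IsBoundary (T h)) ↔ ∃ w, K.HasRelFaces L F w := by
  constructor
  · rintro ⟨h, hh, w, hw⟩
    refine ⟨w, ?_, fun i hi1 hi => (congrFun hw ⟨i, by omega⟩).trans (hT h i _ hi1)⟩
    have h0 : K.d n 0 w = h := (congrFun hw 0).trans (hT0 h)
    exact h0 ▸ hh
  · rintro ⟨w, hw0, hw⟩
    refine ⟨_, hw0, w, funext fun ⟨i, hi⟩ => ?_⟩
    rcases Nat.eq_zero_or_pos i with rfl | hi1
    · exact (hT0 _).symm
    · exact (hw i hi1 (by omega)).trans (hT _ i hi hi1).symm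

lemma homotopicRel_iff {r : ℕ} {x y : K.obj (r + 1)} (hx : K.IsRelSph L b x)
    (hy : K.IsRelSph L b y) :
    K.HomotopicRel L x y ↔ ∃ w : K.obj (r + 2),
      K.HasRelFaces L (K.padFaces b (r + 1) fun a => if a = 0 then x else y) w := by
  rw [← exists_mem_isBoundary_iff (T := fun g => K.relTuple g x y) (fun _ => by simp [relTuple])
    fun g i hi hi1 => ?_]
  · exact ⟨fun h => h.2.2.2,
      fun h => ⟨fun i hi1 hi => by rw [hx.d_eq hi1 hi, hy.d_eq hi1 hi], hx.1, hy.1, h⟩⟩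
  · simp only [relTuple, padFaces]
    split_ifs <;> first | omega | rfl | rw [hx.d_eq hi1 (by omega), K.s_basept b r r le_rfl]

lemma HomotopicRel.refl {r : ℕ} {x : K.obj (r + 1)} (hx : K.IsRelSph L b x) :
    K.HomotopicRel L x x :=
  (homotopicRel_iff hx hx).2 ⟨_, (hasRelFaces_s hx le_add_self le_rfl).congr_tail
    fun a ha => by rw [if_pos (by omega)]; split_ifs <;> rfl⟩

lemma HomotopicRel.euclidean (hK : K.IsKan) (hL : L.IsKan) (hb : b ∈ L.mem 0) {r : ℕ}
    {x y z : K.obj (r + 1)} (hx : K.IsRelSph L b x) (hy : K.IsRelSph L b y)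
    (hz : K.IsRelSph L b z) (hxy : K.HomotopicRel L x y) (hxz : K.HomotopicRel L x z) :
    K.HomotopicRel L y z := by
  obtain ⟨w₁, hw₁⟩ := (homotopicRel_iff hx hy).1 hxy
  obtain ⟨w₂, hw₂⟩ := (homotopicRel_iff hx hz).1 hxz
  -- `w₁`, `w₂` and the sought homotopy `y ≃ z` are the facets of one simplex, with ridges
  -- `e 0 1 = x`, `e 0 2 = y`, `e 1 2 = z`
  let e : ℕ → ℕ → K.obj (r + 1) := fun a c => if c = 1 then x else if a = 0 then y else z
  have hQ : K.IsPaddedHorn L b (r + 1) 2 e fun j => if j = 0 then w₁ else w₂ := by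
    intro j hj hj2
    obtain rfl | rfl : j = 0 ∨ j = 1 := by omega
    · exact hw₁.congr_tail fun a ha => by
        obtain rfl | rfl : a = 0 ∨ a = 1 := (by omega) <;> simp [ridge, e]
    · exact hw₂.congr_tail fun a ha => by
        obtain rfl | rfl : a = 0 ∨ a = 1 := (by omega) <;> simp [ridge, e]
  obtain ⟨w, hw⟩ := exists_hasRelFaces_ridge (o := r + 1) (t := 2) hK hL hb (by omega) le_rfl hQ
  exact (homotopicRel_iff hy hz).2 ⟨w, hw.congr_tail fun a ha => by
    obtain rfl | rfl : a = 0 ∨ a = 1 := (by omega) <;> simp [ridge, e]⟩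

lemma homotopicRel_equivalence (hK : K.IsKan) (hL : L.IsKan) (hb : b ∈ L.mem 0) (r : ℕ) :
    Equivalence fun x y : K.RelSph L b r => K.HomotopicRel L x.1 y.1 where
  refl x := HomotopicRel.refl x.2
  symm {x y} h := HomotopicRel.euclidean hK hL hb x.2 y.2 x.2 h (HomotopicRel.refl x.2)
  trans {x y z} hxy hyz := HomotopicRel.euclidean hK hL hb y.2 x.2 z.2
    (HomotopicRel.euclidean hK hL hb x.2 y.2 x.2 hxy (HomotopicRel.refl x.2)) hyz

end Homotopy

section Tetrahedra

variable {K : SSetC} {L : Subcomplex K} {b : K.obj 0} {m : ℕ}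

def tail4 {α : Type*} (A B C D : α) : ℕ → α
  | 0 => A
  | 1 => B
  | 2 => C
  | _ => D

variable (K L b) in
/-- For `m = 0` the face `A` would sit in position `0`, which holds the face in `L`, so it is
not recorded. -/
def RelTetra (A B C D : K.obj (m + 2)) : Prop :=
  ∃ W : K.obj (m + 3), K.HasRelFaces L (K.padFaces b m (tail4 A B C D)) W

lemma padFaces_tail4 {n : ℕ} (A B C D : K.obj n) (i : ℕ) :
    K.padFaces b m (tail4 A B C D) i =
      if i < m then K.basept b n else if i = m then A else if i = m + 1 then B
      else if i = m + 2 then C else D := by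
  unfold padFaces
  rcases lt_or_ge i m with h | h
  · simp [h]
  obtain ⟨a, rfl⟩ := Nat.exists_eq_add_of_le h
  rcases a with _ | _ | _ | a <;> simp [tail4]

lemma relMulWitness_iff {x y z : K.obj (m + 2)} :
    K.RelMulWitness L b x y z ↔ K.RelTetra L b (K.basept b (m + 2)) y z x :=
  exists_mem_isBoundary_iff (fun _ => by simp [relMulTuple]) fun _ i _ _ => by
    simp only [relMulTuple, padFaces_tail4]
    split_ifs <;> first | rfl | omega

section Degenerate

variable {x : K.obj (m + 2)}

lemma relMulWitness_basept_right (hx : K.IsRelSph L b x) :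
    K.RelMulWitness L b x (K.basept b (m + 2)) x :=
  relMulWitness_iff.2 ⟨_, (hasRelFaces_s (q := m + 2) hx (by omega) le_rfl).congr fun i _ _ => by
    simp only [padFaces_tail4]
    simp only [padFaces]
    split_ifs <;> first | rfl | omega⟩

lemma relMulWitness_basept_left (hx : K.IsRelSph L b x) :
    K.RelMulWitness L b (K.basept b (m + 2)) x x :=
  relMulWitness_iff.2 ⟨_, (hasRelFaces_s (q := m + 1) hx (by omega) (by omega)).congr
    fun i _ _ => by
      simp only [padFaces_tail4]
      simp only [padFaces]
      split_ifs <;> first | rfl | omega⟩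

lemma relTetra_self_self (hm : 1 ≤ m) (hx : K.IsRelSph L b x) :
    K.RelTetra L b x x (K.basept b (m + 2)) (K.basept b (m + 2)) :=
  ⟨_, (hasRelFaces_s (q := m) hx hm (by omega)).congr fun i _ _ => by
    simp only [padFaces_tail4]
    simp only [padFaces]
    split_ifs <;> first | rfl | omega⟩

lemma relTetra_basept (hb : b ∈ L.mem 0) :
    K.RelTetra L b (K.basept b (m + 2)) (K.basept b (m + 2)) (K.basept b (m + 2))
      (K.basept b (m + 2)) :=
  relMulWitness_iff.1 (relMulWitness_basept_left (basept_isRelSph hb (m + 1)))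

end Degenerate

lemma homotopicRel_iff_relMulWitness {x y : K.obj (m + 2)} (hx : K.IsRelSph L b x)
    (hy : K.IsRelSph L b y) :
    K.HomotopicRel L x y ↔ K.RelMulWitness L b y (K.basept b (m + 2)) x := by
  rw [homotopicRel_iff hx hy, relMulWitness_iff]
  refine exists_congr fun w =>
    ⟨fun h => h.congr fun i _ _ => ?_, fun h => h.congr fun i _ _ => ?_⟩ <;>
  · simp only [padFaces_tail4]
    simp only [padFaces]
    split_ifs <;> first | rfl | omega

lemma RelTetra.fill (hK : K.IsKan) (hL : L.IsKan) (hb : b ∈ L.mem 0) {t : ℕ} (ht1 : 1 ≤ t)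
    (ht : t ≤ 4) {e : ℕ → ℕ → K.obj (m + 2)}
    (h : ∀ j ≤ 4, j ≠ t → K.RelTetra L b (ridge e j 0) (ridge e j 1) (ridge e j 2) (ridge e j 3)) :
    K.RelTetra L b (ridge e t 0) (ridge e t 1) (ridge e t 2) (ridge e t 3) := by
  have hQ : ∀ j, ∃ W, j ≤ 4 → j ≠ t → K.HasRelFaces L (K.padFaces b m (ridge e j)) W := by
    intro j
    by_cases hj : j ≤ 4 ∧ j ≠ t
    · obtain ⟨W, hW⟩ := h j hj.1 hj.2
      refine ⟨W, fun _ _ => hW.congr_tail fun a ha => ?_⟩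
      obtain rfl | rfl | rfl | rfl : a = 0 ∨ a = 1 ∨ a = 2 ∨ a = 3 := by omega
      all_goals rfl
    · exact ⟨K.basept b _, fun h1 h2 => absurd ⟨h1, h2⟩ hj⟩
  choose Q hQ using hQ
  obtain ⟨X, hX⟩ := exists_hasRelFaces_ridge (N := m + 1) (o := m) hK hL hb (by omega) (by omega)
    fun j hj hjt => hQ j (by omega) hjt
  refine ⟨X, hX.congr_tail fun a ha => ?_⟩
  obtain rfl | rfl | rfl | rfl : a = 0 ∨ a = 1 ∨ a = 2 ∨ a = 3 := by omega
  all_goals rfl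

def tetraRidges {α : Type*} (e01 e02 e03 e04 e12 e13 e14 e23 e24 e34 : α) : ℕ → ℕ → α
  | 0, 1 => e01
  | 0, 2 => e02
  | 0, 3 => e03
  | 0, 4 => e04
  | 1, 2 => e12
  | 1, 3 => e13
  | 1, 4 => e14
  | 2, 3 => e23
  | 2, 4 => e24
  | _, _ => e34

variable {e01 e02 e03 e04 e12 e13 e14 e23 e24 e34 : K.obj (m + 2)}

lemma RelTetra.fill₁ (hK : K.IsKan) (hL : L.IsKan) (hb : b ∈ L.mem 0)
    (h0 : K.RelTetra L b e01 e02 e03 e04) (h2 : K.RelTetra L b e02 e12 e23 e24)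
    (h3 : K.RelTetra L b e03 e13 e23 e34) (h4 : K.RelTetra L b e04 e14 e24 e34) :
    K.RelTetra L b e01 e12 e13 e14 :=
  RelTetra.fill (e := tetraRidges e01 e02 e03 e04 e12 e13 e14 e23 e24 e34) hK hL hb le_rfl
    (by omega) fun j hj hjt => by
      obtain rfl | rfl | rfl | rfl : j = 0 ∨ j = 2 ∨ j = 3 ∨ j = 4 := by omega
      exacts [h0, h2, h3, h4]

lemma RelTetra.fill₂ (hK : K.IsKan) (hL : L.IsKan) (hb : b ∈ L.mem 0)
    (h0 : K.RelTetra L b e01 e02 e03 e04) (h1 : K.RelTetra L b e01 e12 e13 e14)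
    (h3 : K.RelTetra L b e03 e13 e23 e34) (h4 : K.RelTetra L b e04 e14 e24 e34) :
    K.RelTetra L b e02 e12 e23 e24 :=
  RelTetra.fill (t := 2) (e := tetraRidges e01 e02 e03 e04 e12 e13 e14 e23 e24 e34) hK hL hb
    (by omega) (by omega) fun j hj hjt => by
      obtain rfl | rfl | rfl | rfl : j = 0 ∨ j = 1 ∨ j = 3 ∨ j = 4 := by omega
      exacts [h0, h1, h3, h4]

lemma RelTetra.fill₃ (hK : K.IsKan) (hL : L.IsKan) (hb : b ∈ L.mem 0)
    (h0 : K.RelTetra L b e01 e02 e03 e04) (h1 : K.RelTetra L b e01 e12 e13 e14)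
    (h2 : K.RelTetra L b e02 e12 e23 e24) (h4 : K.RelTetra L b e04 e14 e24 e34) :
    K.RelTetra L b e03 e13 e23 e34 :=
  RelTetra.fill (t := 3) (e := tetraRidges e01 e02 e03 e04 e12 e13 e14 e23 e24 e34) hK hL hb
    (by omega) (by omega) fun j hj hjt => by
      obtain rfl | rfl | rfl | rfl : j = 0 ∨ j = 1 ∨ j = 2 ∨ j = 4 := by omega
      exacts [h0, h1, h2, h4]

lemma RelTetra.fill₄ (hK : K.IsKan) (hL : L.IsKan) (hb : b ∈ L.mem 0)
    (h0 : K.RelTetra L b e01 e02 e03 e04) (h1 : K.RelTetra L b e01 e12 e13 e14)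
    (h2 : K.RelTetra L b e02 e12 e23 e24) (h3 : K.RelTetra L b e03 e13 e23 e34) :
    K.RelTetra L b e04 e14 e24 e34 :=
  RelTetra.fill (t := 4) (e := tetraRidges e01 e02 e03 e04 e12 e13 e14 e23 e24 e34) hK hL hb
    (by omega) le_rfl fun j hj hjt => by
      obtain rfl | rfl | rfl | rfl : j = 0 ∨ j = 1 ∨ j = 2 ∨ j = 3 := by omega
      exacts [h0, h1, h2, h3]

lemma padFaces_ridge_basept {n o j : ℕ} (i : ℕ) :
    K.padFaces b o (ridge (fun _ _ => K.basept b n) j) i = K.basept b n := by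
  unfold padFaces ridge
  split_ifs <;> rfl

lemma exists_relTetra_update (hK : K.IsKan) (hL : L.IsKan) (hb : b ∈ L.mem 0) {t : ℕ}
    (ht1 : 1 ≤ m + t) (ht : t ≤ 3) {Q : ℕ → K.obj (m + 2)}
    (hQ : ∀ j ≤ 3, j ≠ t → K.IsRelSph L b (Q j)) :
    ∃ X, K.IsRelSph L b X ∧ K.RelTetra L b (Function.update Q t X 0)
      (Function.update Q t X 1) (Function.update Q t X 2) (Function.update Q t X 3) := by
  have hQ' : K.IsPaddedHorn L b m t (fun _ _ => K.basept b (m + 1)) Q :=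
    fun j hj hjt => (isRelSph_iff.1 (hQ j (by omega) hjt)).congr fun i _ _ =>
      (padFaces_ridge_basept i).symm
  obtain ⟨Ω, hΩ0, hΩ⟩ := exists_padFaces_filler (o := m) (t := t) hK hL hb ht1 (by omega) hQ'
  refine ⟨_, isRelSph_iff.2 ((hasRelFaces_d_filler ht1 (by omega) hQ' hΩ0 hΩ).congr
    fun i _ _ => padFaces_ridge_basept i), Ω,
    HasRelFaces.congr_tail (b := b) (f := Function.update Q t (K.d (m + 2) (m + t) Ω))
      ⟨hΩ0, fun i hi1 hi => ?_⟩ fun a ha => ?_⟩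
  · unfold padFaces
    by_cases hit : i = m + t
    · rw [if_neg (by omega), hit, Nat.add_sub_cancel_left, Function.update_self]
    · rw [hΩ i hi1 hi hit, padFaces]
      split_ifs
      · rfl
      · rw [Function.update_of_ne (by omega)]
  · obtain rfl | rfl | rfl | rfl : a = 0 ∨ a = 1 ∨ a = 2 ∨ a = 3 := by omega
    all_goals rfl

end Tetrahedra

section Products

variable {K : SSetC} {L : Subcomplex K} {b : K.obj 0} {m : ℕ}
  {x y z p xy yz xyz : K.obj (m + 2)}

lemma exists_relMulWitness (hK : K.IsKan) (hL : L.IsKan) (hb : b ∈ L.mem 0)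
    (hx : K.IsRelSph L b x) (hy : K.IsRelSph L b y) :
    ∃ z, K.IsRelSph L b z ∧ K.RelMulWitness L b x y z := by
  obtain ⟨z, hz, h⟩ := exists_relTetra_update (t := 2)
    (Q := tail4 (K.basept b _) y (K.basept b _) x) hK hL hb (by omega) (by omega)
    fun j hj hjt => by
      obtain rfl | rfl | rfl : j = 0 ∨ j = 1 ∨ j = 3 := by omega
      exacts [basept_isRelSph hb _, hy, hx]
  exact ⟨z, hz, relMulWitness_iff.2 h⟩

lemma exists_relMulWitness_basept (hK : K.IsKan) (hL : L.IsKan) (hb : b ∈ L.mem 0)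
    (hy : K.IsRelSph L b y) :
    ∃ x, K.IsRelSph L b x ∧ K.RelMulWitness L b x y (K.basept b (m + 2)) := by
  obtain ⟨x, hx, h⟩ := exists_relTetra_update (t := 3)
    (Q := tail4 (K.basept b _) y (K.basept b _) (K.basept b _)) hK hL hb (by omega) le_rfl
    fun j hj hjt => by
      obtain rfl | rfl | rfl : j = 0 ∨ j = 1 ∨ j = 2 := by omega
      exacts [basept_isRelSph hb _, hy, basept_isRelSph hb _]
  exact ⟨x, hx, relMulWitness_iff.2 h⟩

lemma RelMulWitness.assoc (hK : K.IsKan) (hL : L.IsKan) (hb : b ∈ L.mem 0)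
    (hyz : K.RelMulWitness L b y z yz) (hxy : K.RelMulWitness L b x y xy)
    (hxy_z : K.RelMulWitness L b xy z xyz) : K.RelMulWitness L b x yz xyz :=
  relMulWitness_iff.2 <| RelTetra.fill₃ hK hL hb (relTetra_basept hb) (relMulWitness_iff.1 hyz)
    (relMulWitness_iff.1 hxy_z) (relMulWitness_iff.1 hxy)

lemma RelMulWitness.assoc_symm (hK : K.IsKan) (hL : L.IsKan) (hb : b ∈ L.mem 0)
    (hyz : K.RelMulWitness L b y z yz) (hxy : K.RelMulWitness L b x y xy)
    (hx_yz : K.RelMulWitness L b x yz xyz) : K.RelMulWitness L b xy z xyz :=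
  relMulWitness_iff.2 <| RelTetra.fill₂ hK hL hb (relTetra_basept hb) (relMulWitness_iff.1 hyz)
    (relMulWitness_iff.1 hx_yz) (relMulWitness_iff.1 hxy)

lemma RelMulWitness.cancel_right (hK : K.IsKan) (hL : L.IsKan) (hb : b ∈ L.mem 0)
    (hyz : K.RelMulWitness L b y z yz) (hx_yz : K.RelMulWitness L b x yz xyz)
    (hxy_z : K.RelMulWitness L b xy z xyz) : K.RelMulWitness L b x y xy :=
  relMulWitness_iff.2 <| RelTetra.fill₄ hK hL hb (relTetra_basept hb) (relMulWitness_iff.1 hyz)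
    (relMulWitness_iff.1 hxy_z) (relMulWitness_iff.1 hx_yz)

lemma RelMulWitness.unique (hK : K.IsKan) (hL : L.IsKan) (hb : b ∈ L.mem 0)
    (hy : K.IsRelSph L b y) (hz : K.IsRelSph L b z) (hp : K.IsRelSph L b p)
    (h : K.RelMulWitness L b x y z) (h' : K.RelMulWitness L b x y p) : K.HomotopicRel L z p :=
  (homotopicRel_iff_relMulWitness hz hp).2 <|
    RelMulWitness.assoc_symm hK hL hb (relMulWitness_basept_right hy) h' h

lemma RelMulWitness.congr_left (hK : K.IsKan) (hL : L.IsKan) (hb : b ∈ L.mem 0)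
    {x' : K.obj (m + 2)} (hx : K.IsRelSph L b x) (hx' : K.IsRelSph L b x') (hy : K.IsRelSph L b y)
    (hxx' : K.HomotopicRel L x x') (h : K.RelMulWitness L b x y z) : K.RelMulWitness L b x' y z :=
  RelMulWitness.assoc hK hL hb (relMulWitness_basept_left hy)
    ((homotopicRel_iff_relMulWitness hx hx').1 hxx') h

lemma RelMulWitness.congr_right (hK : K.IsKan) (hL : L.IsKan) (hb : b ∈ L.mem 0)
    {y' : K.obj (m + 2)} (hy : K.IsRelSph L b y) (hy' : K.IsRelSph L b y') (hz : K.IsRelSph L b z)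
    (hyy' : K.HomotopicRel L y y') (h : K.RelMulWitness L b x y z) : K.RelMulWitness L b x y' z :=
  RelMulWitness.cancel_right hK hL hb ((homotopicRel_iff_relMulWitness hy hy').1 hyy') h
    (relMulWitness_basept_right hz)

lemma RelMulWitness.comm (hK : K.IsKan) (hL : L.IsKan) (hb : b ∈ L.mem 0) (hm : 1 ≤ m)
    (hx : K.IsRelSph L b x) (hy : K.IsRelSph L b y) (h : K.RelMulWitness L b x y p) :
    K.RelMulWitness L b y x p := by
  have hxpy : K.RelTetra L b x p y (K.basept b _) :=
    RelTetra.fill₃ hK hL hb (relMulWitness_iff.1 (relMulWitness_basept_right hx))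
      (relMulWitness_iff.1 h) (relMulWitness_iff.1 (relMulWitness_basept_left hy))
      (relTetra_self_self hm hx)
  have hxxyy : K.RelTetra L b x x y y :=
    RelTetra.fill₂ hK hL hb (relTetra_self_self hm hx) (relTetra_self_self hm hx)
      (relMulWitness_iff.1 (relMulWitness_basept_right hy))
      (relMulWitness_iff.1 (relMulWitness_basept_right hy))
  exact relMulWitness_iff.2 <| RelTetra.fill₁ hK hL hb
    (relMulWitness_iff.1 (relMulWitness_basept_left hx)) hxxyy hxpy
    (relMulWitness_iff.1 (relMulWitness_basept_left hy))

end Products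

section Group

variable {K : SSetC} {L : Subcomplex K} {b : K.obj 0}

lemma exists_relMulDescends (hK : K.IsKan) (hL : L.IsKan) (hb : b ∈ L.mem 0) (m : ℕ) :
    ∃ mul, K.RelMulDescends L b m mul := by
  choose f hf hfw using fun x y : K.RelSph L b (m + 1) => exists_relMulWitness hK hL hb x.2 y.2
  have hwd : ∀ x x' y y' : K.RelSph L b (m + 1), K.HomotopicRel L x.1 x'.1 →
      K.HomotopicRel L y.1 y'.1 → K.HomotopicRel L (f x y) (f x' y') := fun x x' y y' hx hy =>
    (((hfw x y).congr_left hK hL hb x.2 x'.2 y.2 hx).congr_right hK hL hb y.2 y'.2 (hf x y)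
      hy).unique hK hL hb y'.2 (hf x y) (hf x' y') (hfw x' y')
  have hE := homotopicRel_equivalence hK hL hb (m + 1)
  exact ⟨Quot.lift₂ (fun x y => K.relCls L b (m + 1) ⟨f x y, hf x y⟩)
    (fun x _ _ h => Quot.sound (hwd x x _ _ (hE.refl x) h))
    (fun _ _ y h => Quot.sound (hwd _ _ y y h (hE.refl y))),
    fun x y z h => Quot.sound ((hfw x y).unique hK hL hb y.2 (hf x y) z.2 h)⟩

variable (K L) in
def basepointClass (hb : b ∈ L.mem 0) (m : ℕ) : K.piRel L b (m + 1) :=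
  K.relCls L b (m + 1) ⟨K.basept b (m + 2), basept_isRelSph hb (m + 1)⟩

namespace RelMulDescends

variable {m : ℕ} {mul : K.piRel L b (m + 1) → K.piRel L b (m + 1) → K.piRel L b (m + 1)}

lemma one_mul (hmul : K.RelMulDescends L b m mul) (hb : b ∈ L.mem 0)
    (a : K.piRel L b (m + 1)) :
    mul (K.basepointClass L hb m) a = a := by
  induction a using Quot.ind with | mk x => exact hmul _ x x (relMulWitness_basept_left x.2)

lemma mul_one (hmul : K.RelMulDescends L b m mul) (hb : b ∈ L.mem 0)
    (a : K.piRel L b (m + 1)) :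
    mul a (K.basepointClass L hb m) = a := by
  induction a using Quot.ind with | mk x => exact hmul x _ x (relMulWitness_basept_right x.2)

lemma assoc (hmul : K.RelMulDescends L b m mul) (hK : K.IsKan) (hL : L.IsKan)
    (hb : b ∈ L.mem 0) (a₁ a₂ a₃ : K.piRel L b (m + 1)) :
    mul (mul a₁ a₂) a₃ = mul a₁ (mul a₂ a₃) := by
  induction a₁ using Quot.ind with | mk x =>
  induction a₂ using Quot.ind with | mk y =>
  induction a₃ using Quot.ind with | mk z =>
  obtain ⟨xy, hxy, wxy⟩ := exists_relMulWitness hK hL hb x.2 y.2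
  obtain ⟨yz, hyz, wyz⟩ := exists_relMulWitness hK hL hb y.2 z.2
  obtain ⟨xyz, hxyz, wxyz⟩ := exists_relMulWitness hK hL hb hxy z.2
  change mul (mul (K.relCls L b _ x) (K.relCls L b _ y)) (K.relCls L b _ z) =
    mul (K.relCls L b _ x) (mul (K.relCls L b _ y) (K.relCls L b _ z))
  rw [hmul x y ⟨xy, hxy⟩ wxy, hmul y z ⟨yz, hyz⟩ wyz, hmul ⟨xy, hxy⟩ z ⟨xyz, hxyz⟩ wxyz,
    hmul x ⟨yz, hyz⟩ ⟨xyz, hxyz⟩ (wyz.assoc hK hL hb wxy wxyz)]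

lemma exists_mul_eq_one (hmul : K.RelMulDescends L b m mul) (hK : K.IsKan) (hL : L.IsKan)
    (hb : b ∈ L.mem 0) (a : K.piRel L b (m + 1)) : ∃ a', mul a' a = K.basepointClass L hb m := by
  induction a using Quot.ind with | mk y =>
  obtain ⟨x, hx, w⟩ := exists_relMulWitness_basept hK hL hb y.2
  exact ⟨K.relCls L b _ ⟨x, hx⟩, hmul ⟨x, hx⟩ y _ w⟩

lemma exists_inv (hmul : K.RelMulDescends L b m mul) (hK : K.IsKan) (hL : L.IsKan)
    (hb : b ∈ L.mem 0) (a : K.piRel L b (m + 1)) :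
    ∃ a', mul a' a = K.basepointClass L hb m ∧ mul a a' = K.basepointClass L hb m := by
  let : Mul (K.piRel L b (m + 1)) := ⟨mul⟩
  let : One (K.piRel L b (m + 1)) := ⟨K.basepointClass L hb m⟩
  let : Inv (K.piRel L b (m + 1)) := ⟨fun a => (hmul.exists_mul_eq_one hK hL hb a).choose⟩
  let : Group (K.piRel L b (m + 1)) := Group.ofLeftAxioms (hmul.assoc hK hL hb)
    (hmul.one_mul hb) fun a => (hmul.exists_mul_eq_one hK hL hb a).choose_spec
  exact ⟨a⁻¹, inv_mul_cancel a, mul_inv_cancel a⟩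

lemma comm (hmul : K.RelMulDescends L b m mul) (hK : K.IsKan) (hL : L.IsKan)
    (hb : b ∈ L.mem 0) (hm : 1 ≤ m) (a₁ a₂ : K.piRel L b (m + 1)) : mul a₁ a₂ = mul a₂ a₁ := by
  induction a₁ using Quot.ind with | mk x =>
  induction a₂ using Quot.ind with | mk y =>
  obtain ⟨xy, hxy, w⟩ := exists_relMulWitness hK hL hb x.2 y.2
  exact (hmul x y ⟨xy, hxy⟩ w).trans (hmul y x ⟨xy, hxy⟩ (w.comm hK hL hb hm x.2 y.2)).symm

end RelMulDescends

end Group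

section Functoriality

variable {K K' : SSetC} {L : Subcomplex K} {L' : Subcomplex K'} {b : K.obj 0} {b' : K'.obj 0}
  (g : SMap K K')

lemma SMap.isBoundary {n : ℕ} {c : Fin (n + 2) → K.obj n} (h : K.IsBoundary c) :
    K'.IsBoundary (g.app n ∘ c) := by
  obtain ⟨W, rfl⟩ := h
  exact ⟨g.app (n + 1) W, funext fun i => (g.comm_d n i (by omega) W).symm⟩

lemma IsRelSph.map (hgL : ∀ n, ∀ x ∈ L.mem n, g.app n x ∈ L'.mem n) (hgb : g.app 0 b = b')
    {m : ℕ} {x : K.obj (m + 1)} (hx : K.IsRelSph L b x) : K'.IsRelSph L' b' (g.app (m + 1) x) :=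
  ⟨g.comm_d m 0 (by omega) x ▸ hgL m _ hx.1, fun i hi => by
    rw [← g.comm_d m i (by omega) x, hx.2 i hi, g.basept_app, hgb]⟩

lemma HomotopicRel.map (hgL : ∀ n, ∀ x ∈ L.mem n, g.app n x ∈ L'.mem n) {m : ℕ}
    {x y : K.obj (m + 1)} (h : K.HomotopicRel L x y) :
    K'.HomotopicRel L' (g.app (m + 1) x) (g.app (m + 1) y) := by
  obtain ⟨hd, hx0, hy0, l, hl, hW⟩ := h
  refine ⟨fun i hi1 hi => ?_, g.comm_d m 0 (by omega) x ▸ hgL m _ hx0,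
    g.comm_d m 0 (by omega) y ▸ hgL m _ hy0, g.app (m + 1) l, hgL _ _ hl, ?_⟩
  · rw [← g.comm_d m i hi x, ← g.comm_d m i hi y, hd i hi1 hi]
  · convert g.isBoundary hW using 1
    funext i
    simp only [relTuple, Function.comp_apply]
    split_ifs <;> first | rfl | rw [g.comm_s m m le_rfl, g.comm_d m _ (by omega)]

lemma RelMulWitness.map (hgL : ∀ n, ∀ x ∈ L.mem n, g.app n x ∈ L'.mem n) (hgb : g.app 0 b = b')
    {m : ℕ} {x y z : K.obj (m + 2)} (h : K.RelMulWitness L b x y z) :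
    K'.RelMulWitness L' b' (g.app (m + 2) x) (g.app (m + 2) y) (g.app (m + 2) z) := by
  obtain ⟨l, hl, hW⟩ := h
  refine ⟨g.app (m + 2) l, hgL _ _ hl, ?_⟩
  convert g.isBoundary hW using 1
  funext i
  simp only [relMulTuple, Function.comp_apply]
  split_ifs <;> first | rfl | rw [g.basept_app, hgb]

end Functoriality

end SSetC

open SSetC in
/-- For every pointed pair `(K, L, ⋆)` of Kan complexes the
relative homotopy group `π_n(K, L, ⋆)` is a well-defined set for `n ≥ 1`
(relative homotopy is an equivalence relation on the representatives), a
well-defined group for `n = m+2 ≥ 2` (products exist, descend to the quotient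
independently of all choices, `[⋆]` is an identity, inverses exist and the
product is associative), abelian for `n ≥ 3`; moreover the construction is
functorial: maps of pointed pairs preserve representatives, relative homotopy
and products, identities and composites behave functorially. -/
theorem relative_homotopy_group_welldefined (K : SSetC) (hK : K.IsKan)
    (L : Subcomplex K) (hL : L.IsKan) (b : K.obj 0) (hb : b ∈ L.mem 0) :
    (∀ m : ℕ, Equivalence (fun x y : K.RelSph L b m => K.HomotopicRel L x.1 y.1)) ∧
    (∀ m : ℕ,
      K.IsRelSph L b (K.basept b (m + 2)) ∧
      (∀ x y : K.obj (m + 2), K.IsRelSph L b x → K.IsRelSph L b y →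
        ∃ z : K.obj (m + 2), K.IsRelSph L b z ∧ K.RelMulWitness L b x y z) ∧
      (∃ mul : K.piRel L b (m + 1) → K.piRel L b (m + 1) → K.piRel L b (m + 1),
        K.RelMulDescends L b m mul ∧
        (∃ e : K.piRel L b (m + 1),
          (∀ x : K.RelSph L b (m + 1), x.1 = K.basept b (m + 2) →
            e = K.relCls L b (m + 1) x) ∧
          (∀ a, mul e a = a) ∧ (∀ a, mul a e = a) ∧
          (∀ a, ∃ a', mul a' a = e ∧ mul a a' = e)) ∧
        (∀ a a' a'', mul (mul a a') a'' = mul a (mul a' a'')) ∧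
        (1 ≤ m → ∀ a a', mul a a' = mul a' a))) ∧
    (∀ (K' : SSetC) (L' : Subcomplex K') (b' : K'.obj 0) (g : SMap K K'),
      (∀ (n : ℕ), ∀ x ∈ L.mem n, g.app n x ∈ L'.mem n) → g.app 0 b = b' →
      ∀ m : ℕ,
        (∀ x : K.obj (m + 1), K.IsRelSph L b x → K'.IsRelSph L' b' (g.app (m + 1) x)) ∧
        (∀ x y : K.obj (m + 1), K.IsRelSph L b x → K.IsRelSph L b y →
          K.HomotopicRel L x y →
          K'.HomotopicRel L' (g.app (m + 1) x) (g.app (m + 1) y)) ∧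
        (∀ x y z : K.obj (m + 2), K.RelMulWitness L b x y z →
          K'.RelMulWitness L' b' (g.app (m + 2) x) (g.app (m + 2) y) (g.app (m + 2) z)) ∧
        (∀ x : K.obj (m + 1), (SMap.idMap K).app (m + 1) x = x) ∧
        (∀ (K'' : SSetC) (g' : SMap K' K'') (x : K.obj (m + 1)),
          (g.comp g').app (m + 1) x = g'.app (m + 1) (g.app (m + 1) x))) := by
  refine ⟨homotopicRel_equivalence hK hL hb, fun m => ⟨basept_isRelSph hb (m + 1),
    fun x y hx hy => exists_relMulWitness hK hL hb hx hy, ?_⟩,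
    fun K' L' b' g hgL hgb m => ⟨fun x hx => hx.map g hgL hgb, fun x y _ _ h => h.map g hgL,
      fun x y z h => h.map g hgL hgb, fun x => rfl, fun K'' g' x => rfl⟩⟩
  obtain ⟨mul, hmul⟩ := exists_relMulDescends hK hL hb m
  exact ⟨mul, hmul, ⟨K.basepointClass L hb m,
      fun x hx => congrArg (Quot.mk _) (Subtype.ext hx.symm), hmul.one_mul hb, hmul.mul_one hb,
      hmul.exists_inv hK hL hb⟩,
    hmul.assoc hK hL hb, fun hm => hmul.comm hK hL hb hm⟩
end

section
/- For every simplicial n-skeleton S there is a canonical completion Ŝ, obtained by iteratively adjoining in each dimension k+1 ≥ n+1 exactly one (k+1)-simplex for each k-cycle (with d_i picking the i-th entry of the cycle), with the following properties: (1) if S has the Kan property, then Ŝ is a Kan complex and π_k(Ŝ,⋆) = 0 for all k ≥ n and any base point; (2) the completion preserves minimality; (3) the assignment S ↦ Ŝ is a functor sSk_n → sSet right-adjoint to the restriction R_n, i.e. there is a natural bijection Hom_sSet(K, Ŝ) ≅ Hom_{sSk_n}(R_n K, S) for every simplicial set K and every n-skeleton S. -/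
/-- A simplicial `N`-skeleton: sets `S_0, …, S_N` with face and degeneracy
operators satisfying the simplicial identities in the range where they are
defined.  (`obj k` for `k > N` is irrelevant: no operators or morphism
components refer to it.) -/
structure SkelC (N : ℕ) where
  obj : ℕ → Type
  d : ∀ k, k + 1 ≤ N → ℕ → obj (k + 1) → obj k
  s : ∀ k, k + 1 ≤ N → ℕ → obj k → obj (k + 1)
  dd : ∀ (k : ℕ) (h : k + 2 ≤ N) (i j : ℕ), i < j → j ≤ k + 2 → ∀ x : obj (k + 2),
      d k (Nat.le_of_succ_le h) i (d (k + 1) h j x) =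
      d k (Nat.le_of_succ_le h) (j - 1) (d (k + 1) h i x)
  ss : ∀ (k : ℕ) (h : k + 2 ≤ N) (i j : ℕ), i ≤ j → j ≤ k → ∀ x : obj k,
      s (k + 1) h i (s k (Nat.le_of_succ_le h) j x) =
      s (k + 1) h (j + 1) (s k (Nat.le_of_succ_le h) i x)
  ds_lt : ∀ (k : ℕ) (h : k + 2 ≤ N) (i j : ℕ), i < j → j ≤ k + 1 → ∀ x : obj (k + 1),
      d (k + 1) h i (s (k + 1) h j x) =
      s k (Nat.le_of_succ_le h) (j - 1) (d k (Nat.le_of_succ_le h) i x)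
  ds_self : ∀ (k : ℕ) (h : k + 1 ≤ N) (i : ℕ), i ≤ k → ∀ x : obj k,
      d k h i (s k h i x) = x
  ds_succ : ∀ (k : ℕ) (h : k + 1 ≤ N) (i : ℕ), i ≤ k → ∀ x : obj k,
      d k h (i + 1) (s k h i x) = x
  ds_gt : ∀ (k : ℕ) (h : k + 2 ≤ N) (i j : ℕ), j + 1 < i → i ≤ k + 2 → ∀ x : obj (k + 1),
      d (k + 1) h i (s (k + 1) h j x) =
      s k (Nat.le_of_succ_le h) j (d k (Nat.le_of_succ_le h) (i - 1) x)

/-- A map of simplicial `N`-skeletons. -/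
structure SkelMap {N : ℕ} (S T : SkelC N) where
  app : ∀ k, k ≤ N → S.obj k → T.obj k
  comm_d : ∀ (k : ℕ) (h : k + 1 ≤ N) (i : ℕ), i ≤ k + 1 → ∀ x : S.obj (k + 1),
    app k (Nat.le_of_succ_le h) (S.d k h i x) = T.d k h i (app (k + 1) h x)
  comm_s : ∀ (k : ℕ) (h : k + 1 ≤ N) (i : ℕ), i ≤ k → ∀ x : S.obj k,
    app (k + 1) h (S.s k h i x) = T.s k h i (app k (Nat.le_of_succ_le h) x)

namespace SkelC

/-- The restriction functor `R_N : sSet → sSk_N`, forgetting all dimensions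
above `N`. -/
def skelRestrict (N : ℕ) (K : SSetC) : SkelC N where
  obj := K.obj
  d k _ := K.d k
  s k _ := K.s k
  dd k _ i j h1 h2 x := K.dd k i j h1 h2 x
  ss k _ i j h1 h2 x := K.ss k i j h1 h2 x
  ds_lt k _ i j h1 h2 x := K.ds_lt k i j h1 h2 x
  ds_self k _ i hi x := K.ds_self k i hi x
  ds_succ k _ i hi x := K.ds_succ k i hi x
  ds_gt k _ i j h1 h2 x := K.ds_gt k i j h1 h2 x

variable {N : ℕ} (S : SkelC N)

/-- Compatibility (cycle condition) for tuples of `m`-simplices of a skeleton. -/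
def SkelCompat : ∀ {m : ℕ}, m ≤ N → (Fin (m + 2) → S.obj m) → Prop
  | 0 => fun _ _ => True
  | m + 1 => fun h c => ∀ i j : Fin (m + 3), (i : ℕ) < (j : ℕ) →
      S.d m h i (c j) = S.d m h ((j : ℕ) - 1) (c i)

/-- Horn compatibility (the `k`-th entry is disregarded). -/
def SkelHornCompat : ∀ {m : ℕ}, m ≤ N → ℕ → (Fin (m + 2) → S.obj m) → Prop
  | 0 => fun _ _ _ => True
  | m + 1 => fun h k c => ∀ i j : Fin (m + 3), (i : ℕ) ≠ k → (j : ℕ) ≠ k →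
      (i : ℕ) < (j : ℕ) → S.d m h i (c j) = S.d m h ((j : ℕ) - 1) (c i)

/-- `∂x = ∂y` inside a skeleton. -/
def SkelSameBdry : ∀ {m : ℕ}, m ≤ N → S.obj m → S.obj m → Prop
  | 0 => fun _ _ _ => True
  | m + 1 => fun h x y => ∀ i : Fin (m + 2), S.d m h i x = S.d m h i y

/-- The homotopy cycle `(s_{m-1} d_0 x, …, s_{m-1} d_{m-1} x, x, y)` in a skeleton. -/
def skelHomotopyTuple : ∀ {m : ℕ}, m + 1 ≤ N → S.obj m → S.obj m → Fin (m + 2) → S.obj m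
  | 0 => fun _ x y => ![x, y]
  | m + 1 => fun h x y i =>
      if (i : ℕ) < m + 1 then
        S.s m (Nat.le_of_succ_le h) m (S.d m (Nat.le_of_succ_le h) i x)
      else if (i : ℕ) = m + 1 then x else y

/-- Homotopy of `m`-simplices of a skeleton (for `m + 1 ≤ N`, so that the
filling simplex is available). -/
def SkelHomotopic {m : ℕ} (h : m + 1 ≤ N) (x y : S.obj m) : Prop :=
  ∃ z : S.obj (m + 1), ∀ i : Fin (m + 2), S.d m h i z = S.skelHomotopyTuple h x y i

/-- A minimal skeleton: homotopic simplices are equal, and top-dimensional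
simplices with equal boundaries are equal. -/
def SkelMinimal : Prop :=
  (∀ (m : ℕ) (h : m + 1 ≤ N) (x y : S.obj m),
    S.SkelSameBdry (Nat.le_of_succ_le h) x y → S.SkelHomotopic h x y → x = y) ∧
  (∀ x y : S.obj N, S.SkelSameBdry (le_refl N) x y → x = y)

/-- The Kan property for a skeleton: horns below the top dimension have
fillings, and top-dimensional horns can be completed to cycles. -/
def SkelIsKan : Prop :=
  (∀ (m : ℕ) (h : m + 1 ≤ N) (k : ℕ), k ≤ m + 1 → ∀ c : Fin (m + 2) → S.obj m,
    S.SkelHornCompat (Nat.le_of_succ_le h) k c →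
    ∃ x : S.obj (m + 1), ∀ i : Fin (m + 2), (i : ℕ) ≠ k → S.d m h i x = c i) ∧
  (∀ k : ℕ, (hk : k ≤ N + 1) → ∀ c : Fin (N + 2) → S.obj N,
    S.SkelHornCompat (le_refl N) k c →
    ∃ xk : S.obj N, S.SkelCompat (le_refl N) (Function.update c ⟨k, by omega⟩ xk))

end SkelC

/-!
The completion is built one dimension at a time. Up to dimension `N` it is `S`; above `N` the
`(k+1)`-simplices are the `k`-cycles, `d_i` picks the `i`-th entry, and `s_i x` is the cycle that
the simplicial identities prescribe as the boundary of `s_i x`. The identities involving a new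
level only see the two levels below it, so the construction iterates on windows of three
consecutive levels.

The completion is `N`-coskeletal: every cycle of dimension `≥ N` bounds exactly one simplex, and
the rest follows from this. The faces of the missing face of a horn of dimension `> N + 1` form a
cycle, hence are filled; in dimension `N + 1` the Kan property of `S` completes the horn to a
cycle. The homotopy cycle between a sphere of dimension `> N` and the base point is a cycle,
hence a boundary. Simplices of dimension `> N` are determined by their boundaries, which gives
minimality, and a map into a coskeletal simplicial set is determined by, and can be constructed
inductively from, its `N`-truncation, which gives the adjunction.
-/

namespace SkelMap

variable {N : ℕ} {R S T : SkelC N}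

def comp (f : SkelMap R S) (g : SkelMap S T) : SkelMap R T where
  app k h x := g.app k h (f.app k h x)
  comm_d k h i hi x := by rw [f.comm_d k h i hi, g.comm_d k h i hi]
  comm_s k h i hi x := by rw [f.comm_s k h i hi, g.comm_s k h i hi]

lemma ext {f g : SkelMap S T} (h : f.app = g.app) : f = g := by
  cases f; cases g; cases h; rfl

variable (f : SkelMap S T)

lemma skelCompat : ∀ {m : ℕ} (h : m ≤ N) {c : Fin (m + 2) → S.obj m},
    S.SkelCompat h c → T.SkelCompat h fun i => f.app m h (c i)
  | 0, _, _, _ => trivial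
  | m + 1, h, c, hc => fun i j hij => by
    rw [← f.comm_d m h i (by omega), ← f.comm_d m h (j - 1) (by omega), hc i j hij]

lemma skelHornCompat : ∀ {m : ℕ} (h : m ≤ N) {k : ℕ} {c : Fin (m + 2) → S.obj m},
    S.SkelHornCompat h k c → T.SkelHornCompat h k fun i => f.app m h (c i)
  | 0, _, _, _, _ => trivial
  | m + 1, h, _, c, hc => fun i j hi hj hij => by
    rw [← f.comm_d m h i (by omega), ← f.comm_d m h (j - 1) (by omega), hc i j hi hj hij]

lemma skelSameBdry : ∀ {m : ℕ} (h : m ≤ N) {x y : S.obj m},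
    S.SkelSameBdry h x y → T.SkelSameBdry h (f.app m h x) (f.app m h y)
  | 0, _, _, _, _ => trivial
  | m + 1, h, x, y, hxy => fun i => by
    rw [← f.comm_d m h i (by omega), ← f.comm_d m h i (by omega), hxy i]

lemma app_skelHomotopyTuple {m : ℕ} (h : m + 1 ≤ N) (x y : S.obj m) (i : Fin (m + 2)) :
    f.app m (Nat.le_of_succ_le h) (S.skelHomotopyTuple h x y i) =
      T.skelHomotopyTuple h (f.app m (Nat.le_of_succ_le h) x)
        (f.app m (Nat.le_of_succ_le h) y) i := by
  cases m with
  | zero => fin_cases i <;> rfl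
  | succ m =>
    simp only [SkelC.skelHomotopyTuple]
    split_ifs
    · rw [f.comm_s m _ m le_rfl, f.comm_d m _ i (by omega)]
    · rfl
    · rfl

lemma skelHomotopic {m : ℕ} (h : m + 1 ≤ N) {x y : S.obj m} (hxy : S.SkelHomotopic h x y) :
    T.SkelHomotopic h (f.app m (Nat.le_of_succ_le h) x) (f.app m (Nat.le_of_succ_le h) y) :=
  let ⟨z, hz⟩ := hxy
  ⟨f.app (m + 1) h z, fun i => by
    rw [← f.comm_d m h i (by omega), hz i, app_skelHomotopyTuple]⟩

theorem comp_bijective (g : SkelMap T S) (hgf : ∀ k h x, g.app k h (f.app k h x) = x)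
    (hfg : ∀ k h x, f.app k h (g.app k h x) = x) :
    Function.Bijective fun φ : SkelMap R S => φ.comp f := by
  refine ⟨fun φ ψ h => ext (funext fun k => funext fun hk => funext fun x => ?_),
    fun χ => ⟨χ.comp g, ext (funext fun k => funext fun hk => funext fun x => hfg k hk _)⟩⟩
  rw [← hgf k hk (φ.app k hk x), ← hgf k hk (ψ.app k hk x)]
  exact congrArg (g.app k hk) (congrFun (congrFun (congrFun (congrArg app h) k) hk) x)

end SkelMap

namespace SkelC

variable {N : ℕ} {S T : SkelC N}

theorem SkelIsKan.of_retract (f : SkelMap T S) (g : SkelMap S T)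
    (hgf : ∀ k h x, g.app k h (f.app k h x) = x) (hS : S.SkelIsKan) : T.SkelIsKan := by
  refine ⟨fun m h k hk c hc => ?_, fun k hk c hc => ?_⟩
  · obtain ⟨x, hx⟩ := hS.1 m h k hk _ (f.skelHornCompat _ hc)
    exact ⟨g.app (m + 1) h x, fun i hi => by rw [← g.comm_d m h i (by omega), hx i hi, hgf]⟩
  · obtain ⟨y, hy⟩ := hS.2 k hk _ (f.skelHornCompat _ hc)
    refine ⟨g.app N le_rfl y, ?_⟩
    convert g.skelCompat le_rfl hy using 1
    funext i
    rw [Function.apply_update (fun _ => g.app N le_rfl)]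
    simp only [hgf]

theorem SkelMinimal.of_injective (f : SkelMap T S) (hf : ∀ k h, Function.Injective (f.app k h))
    (hS : S.SkelMinimal) : T.SkelMinimal :=
  ⟨fun m h _ _ hxy hh => hf _ _ (hS.1 m h _ _ (f.skelSameBdry _ hxy) (f.skelHomotopic h hh)),
    fun _ _ hxy => hf _ _ (hS.2 _ _ (f.skelSameBdry _ hxy))⟩

end SkelC

namespace SSetC

variable {K : SSetC}

def IsCoskeletal (K : SSetC) (N : ℕ) : Prop :=
  ∀ k, N ≤ k → ∀ c : Fin (k + 2) → K.obj k, K.Compat c → ∃! x : K.obj (k + 1), K.bdry x = c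

lemma compat_bdry : ∀ {m : ℕ} (x : K.obj (m + 1)), K.Compat (K.bdry x)
  | 0, _ => trivial
  | _ + 1, x => fun i j hij => K.dd _ i j hij (by omega) x

lemma IsCoskeletal.bdry_injective {N k : ℕ} (hK : K.IsCoskeletal N) (hk : N ≤ k) :
    Function.Injective (K.bdry : K.obj (k + 1) → _) := by
  intro x y h
  obtain ⟨z, -, hz⟩ := hK k hk _ (K.compat_bdry x)
  exact (hz x rfl).trans (hz y h.symm).symm

lemma d_d_of_le {n i j : ℕ} (hij : i ≤ j) (hj : j ≤ n + 1) (x : K.obj (n + 2)) :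
    K.d n j (K.d (n + 1) i x) = K.d n i (K.d (n + 1) (j + 1) x) := by
  rw [K.dd n i (j + 1) (by omega) (by omega), Nat.add_sub_cancel]

/-- The would-be boundary of the missing face of a `k`-horn `c`. -/
def hornFace (K : SSetC) (k : ℕ) {m : ℕ} (c : Fin (m + 3) → K.obj (m + 1)) (a : Fin (m + 2)) :
    K.obj m :=
  if (a : ℕ) < k then K.d m (k - 1) (c ⟨a, by omega⟩) else K.d m k (c ⟨a + 1, by omega⟩)

lemma compat_hornFace {k m : ℕ} {c : Fin (m + 3) → K.obj (m + 1)} (hk : k ≤ m + 2)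
    (hc : K.HornCompat k c) : K.Compat (K.hornFace k c) := by
  cases m with
  | zero => trivial
  | succ m =>
    have hc' : ∀ a b (ha : a < m + 4) (hb : b < m + 4), a ≠ k → b ≠ k → a < b →
        K.d (m + 1) a (c ⟨b, hb⟩) = K.d (m + 1) (b - 1) (c ⟨a, ha⟩) :=
      fun a b ha hb => hc ⟨a, ha⟩ ⟨b, hb⟩
    intro i j hij
    have hj := j.isLt
    simp only [hornFace]
    split_ifs with hjk hik hik
    · rw [K.dd m i (k - 1) (by omega) (by omega), hc' i j (by omega) (by omega) (by omega)
        (by omega) hij, K.dd m (j - 1) (k - 1) (by omega) (by omega)]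
    · omega
    · rw [K.dd m i k hik (by omega), hc' i (j + 1) (by omega) (by omega) (by omega) (by omega)
        (by omega), ← K.dd m (k - 1) j (by omega) (by omega), Nat.add_sub_cancel]
    · rw [K.d_d_of_le (by omega) (by omega), hc' (i + 1) (j + 1) (by omega) (by omega)
        (by omega) (by omega) (by omega), Nat.add_sub_cancel, K.dd m k j (by omega) (by omega)]

lemma compat_update_of_bdry_eq_hornFace {k m : ℕ} {c : Fin (m + 3) → K.obj (m + 1)}
    (hk : k ≤ m + 2) (hc : K.HornCompat k c) {y : K.obj (m + 1)} (hy : K.bdry y = K.hornFace k c) :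
    K.Compat (Function.update c ⟨k, by omega⟩ y) := by
  have hface : ∀ a (ha : a < m + 2), K.d m a y =
      if a < k then K.d m (k - 1) (c ⟨a, by omega⟩) else K.d m k (c ⟨a + 1, by omega⟩) :=
    fun a ha => congrFun hy ⟨a, ha⟩
  have hne : ∀ l : Fin (m + 3), (l : ℕ) ≠ k → Function.update c ⟨k, by omega⟩ y l = c l :=
    fun l hl => Function.update_of_ne (Fin.ne_of_val_ne hl) _ _
  have heq : ∀ l : Fin (m + 3), (l : ℕ) = k → Function.update c ⟨k, by omega⟩ y l = y :=
    fun l hl => (congrArg _ (Fin.ext hl)).trans (Function.update_self _ _ _)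
  intro i j hij
  have hj := j.isLt
  rcases eq_or_ne (i : ℕ) k with hik | hik
  · rw [heq i hik, hne j (by omega), hface (j - 1) (by omega), if_neg (by omega)]
    congr 2
    ext
    simp only
    omega
  · rw [hne i hik]
    rcases eq_or_ne (j : ℕ) k with hjk | hjk
    · rw [heq j hjk, hface i (by omega), if_pos (by omega), hjk]
    · rw [hne j hjk]
      exact hc i j hik hjk hij

lemma exists_compat_update_of_hornCompat {k m : ℕ}
    (hfill : ∀ c : Fin (m + 2) → K.obj m, K.Compat c → K.IsBoundary c) (hk : k ≤ m + 2)
    {c : Fin (m + 3) → K.obj (m + 1)} (hc : K.HornCompat k c) :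
    ∃ y, K.Compat (Function.update c ⟨k, by omega⟩ y) :=
  let ⟨y, hy⟩ := hfill _ (compat_hornFace hk hc)
  ⟨y, compat_update_of_bdry_eq_hornFace hk hc hy⟩

open SkelC

variable {N : ℕ}

lemma skelCompat_skelRestrict_iff :
    ∀ {m : ℕ} (h : m ≤ N) (c : Fin (m + 2) → K.obj m),
      (skelRestrict N K).SkelCompat h c ↔ K.Compat c
  | 0, _, _ => Iff.rfl
  | _ + 1, _, _ => Iff.rfl

lemma skelHornCompat_skelRestrict_iff :
    ∀ {m : ℕ} (h : m ≤ N) (k : ℕ) (c : Fin (m + 2) → K.obj m),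
      (skelRestrict N K).SkelHornCompat h k c ↔ K.HornCompat k c
  | 0, _, _, _ => Iff.rfl
  | _ + 1, _, _, _ => Iff.rfl

lemma skelSameBdry_skelRestrict_iff :
    ∀ {m : ℕ} (h : m ≤ N) (x y : K.obj m),
      (skelRestrict N K).SkelSameBdry h x y ↔ K.SameBdry x y
  | 0, _, _, _ => Iff.rfl
  | _ + 1, _, _, _ => funext_iff.symm

lemma skelHomotopic_skelRestrict_iff {m : ℕ} (h : m + 1 ≤ N) (x y : K.obj m) :
    (skelRestrict N K).SkelHomotopic h x y ↔ K.Homotopic x y := by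
  have htuple : (skelRestrict N K).skelHomotopyTuple h x y = K.homotopyTuple x y := by
    cases m <;> rfl
  unfold SkelHomotopic Homotopic IsBoundary
  rw [htuple]
  exact exists_congr fun _ => funext_iff.symm

theorem IsCoskeletal.isKan (hK : K.IsCoskeletal N) (hS : (skelRestrict N K).SkelIsKan) :
    K.IsKan := by
  intro m k hk c hc
  rcases lt_or_ge m N with hm | hm
  · exact hS.1 m hm k hk c ((skelHornCompat_skelRestrict_iff _ k c).2 hc)
  obtain ⟨y, hy⟩ : ∃ y, K.Compat (Function.update c ⟨k, by omega⟩ y) := by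
    rcases hm.eq_or_lt with rfl | hm
    · obtain ⟨y, hy⟩ := hS.2 k hk c ((skelHornCompat_skelRestrict_iff _ k c).2 hc)
      exact ⟨y, (skelCompat_skelRestrict_iff _ _).1 hy⟩
    · obtain ⟨m, rfl⟩ : ∃ m', m = m' + 1 := ⟨m - 1, by omega⟩
      exact exists_compat_update_of_hornCompat (fun c hc => (hK m (by omega) c hc).exists) hk hc
  obtain ⟨x, hx, -⟩ := hK m hm _ hy
  exact ⟨x, fun i hi => (congrFun hx i).trans (Function.update_of_ne (Fin.ne_of_val_ne hi) _ _)⟩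

lemma compat_of_isSph {b : K.obj 0} {k : ℕ} {c : Fin (k + 3) → K.obj (k + 1)}
    (hc : ∀ l, K.IsSph b (c l)) : K.Compat c :=
  fun i j _ => (hc j ⟨i, by omega⟩).trans (hc i ⟨j - 1, by omega⟩).symm

lemma isSph_homotopyTuple_basept {b : K.obj 0} {k : ℕ} {x : K.obj (k + 1)} (hx : K.IsSph b x)
    (l : Fin (k + 3)) : K.IsSph b (K.homotopyTuple x (K.basept b (k + 1)) l) := by
  simp only [homotopyTuple]
  split_ifs with hl
  · rw [hx ⟨l, by omega⟩, K.s_basept b k k le_rfl]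
    exact K.basept_isSph b k
  · exact hx
  · exact K.basept_isSph b k

lemma homotopic_basept_of_isSph {b : K.obj 0} {k : ℕ}
    (hfill : ∀ c : Fin (k + 3) → K.obj (k + 1), K.Compat c → K.IsBoundary c)
    {x : K.obj (k + 1)} (hx : K.IsSph b x) : K.Homotopic x (K.basept b (k + 1)) :=
  hfill _ (compat_of_isSph (isSph_homotopyTuple_basept hx))

theorem IsCoskeletal.minimal (hK : K.IsCoskeletal N) (hS : (skelRestrict N K).SkelMinimal) :
    K.Minimal := by
  intro n x y hxy hh
  rcases lt_trichotomy n N with hn | rfl | hn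
  · exact hS.1 n hn x y ((skelSameBdry_skelRestrict_iff _ x y).2 hxy)
      ((skelHomotopic_skelRestrict_iff hn x y).2 hh)
  · exact hS.2 x y ((skelSameBdry_skelRestrict_iff _ x y).2 hxy)
  · obtain ⟨q, rfl⟩ : ∃ q, n = q + 1 := ⟨n - 1, by omega⟩
    exact hK.bdry_injective (by omega) hxy

variable {K' : SSetC}

def SMap.restrict (N : ℕ) (f : SMap K' K) : SkelMap (skelRestrict N K') (skelRestrict N K) where
  app k _ := f.app k
  comm_d k _ := f.comm_d k
  comm_s k _ := f.comm_s k

lemma SMap.ext {f g : SMap K' K} (h : f.app = g.app) : f = g := by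
  cases f; cases g; cases h; rfl

theorem IsCoskeletal.restrict_injective (hK : K.IsCoskeletal N) :
    Function.Injective (SMap.restrict N : SMap K' K → _) := by
  intro f g hfg
  have hlow : ∀ k (h : k ≤ N) x, f.app k x = g.app k x := fun k h x =>
    congrFun (congrFun (congrFun (congrArg SkelMap.app hfg) k) h) x
  refine SMap.ext (funext fun k => funext fun x => ?_)
  induction k with
  | zero => exact hlow 0 (Nat.zero_le N) x
  | succ k ih =>
    by_cases hk : k + 1 ≤ N
    · exact hlow _ hk x
    · refine hK.bdry_injective (by omega) (funext fun i => ?_)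
      simp only [bdry]
      rw [← f.comm_d k i (by omega), ← g.comm_d k i (by omega), ih]

namespace IsCoskeletal

variable (G : ∀ k, k ≤ N → K'.obj k → K.obj k)

open Classical in
/-- The last branch is a placeholder, never taken when `K` is `N`-coskeletal. -/
noncomputable def liftApp : ∀ k, K'.obj k → K.obj k
  | 0, x => G 0 (Nat.zero_le N) x
  | k + 1, x =>
    if h : k + 1 ≤ N then G (k + 1) h x
    else if hx : ∃ y, K.bdry y = fun i : Fin (k + 2) => liftApp k (K'.d k i x) then hx.choose
    else K.s k 0 (liftApp k (K'.d k 0 x))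

lemma liftApp_of_le : ∀ {k : ℕ} (h : k ≤ N) (x : K'.obj k), liftApp G k x = G k h x
  | 0, _, _ => rfl
  | _ + 1, h, _ => dif_pos h

lemma liftApp_succ_of_not_le {k : ℕ} (h : ¬k + 1 ≤ N) (x : K'.obj (k + 1))
    (hx : ∃ y, K.bdry y = fun i : Fin (k + 2) => liftApp G k (K'.d k i x)) :
    liftApp G (k + 1) x = hx.choose := by
  rw [liftApp, dif_neg h, dif_pos hx]

variable {g : SkelMap (skelRestrict N K') (skelRestrict N K)}

lemma liftApp_comm_d_of_compat (hK : K.IsCoskeletal N) (k : ℕ)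
    (hc : ∀ x : K'.obj (k + 1), K.Compat fun i : Fin (k + 2) => liftApp g.app k (K'.d k i x))
    (i : ℕ) (hi : i ≤ k + 1) (x : K'.obj (k + 1)) :
    liftApp g.app k (K'.d k i x) = K.d k i (liftApp g.app (k + 1) x) := by
  by_cases h : k + 1 ≤ N
  · rw [liftApp_of_le g.app h, liftApp_of_le g.app (by omega)]
    exact g.comm_d k h i hi x
  · have hx := (hK k (by omega) _ (hc x)).exists
    have hbdry : K.bdry (liftApp g.app (k + 1) x) =
        fun i : Fin (k + 2) => liftApp g.app k (K'.d k i x) := by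
      rw [liftApp_succ_of_not_le g.app h x hx]
      exact hx.choose_spec
    exact (congrFun hbdry ⟨i, by omega⟩).symm

lemma liftApp_comm_d (hK : K.IsCoskeletal N) :
    ∀ (k i : ℕ), i ≤ k + 1 → ∀ x : K'.obj (k + 1),
      liftApp g.app k (K'.d k i x) = K.d k i (liftApp g.app (k + 1) x)
  | 0 => liftApp_comm_d_of_compat hK 0 fun _ => trivial
  | k + 1 => liftApp_comm_d_of_compat hK (k + 1) fun x i j hij => by
      rw [← liftApp_comm_d hK k i (by omega), ← liftApp_comm_d hK k (j - 1) (by omega),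
        K'.dd k i j hij (by omega) x]

lemma liftApp_comm_s (hK : K.IsCoskeletal N) (k : ℕ) :
    ∀ i : ℕ, i ≤ k → ∀ x : K'.obj k,
      liftApp g.app (k + 1) (K'.s k i x) = K.s k i (liftApp g.app k x) := by
  induction k using Nat.strong_induction_on with | _ k ih => ?_
  intro i hi x
  by_cases h : k + 1 ≤ N
  · rw [liftApp_of_le g.app h, liftApp_of_le g.app (by omega)]
    exact g.comm_s k h i hi x
  refine hK.bdry_injective (by omega) (funext fun j => ?_)
  have hj := j.isLt
  simp only [bdry]
  rw [← liftApp_comm_d hK k j (by omega)]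
  rcases lt_or_ge (j : ℕ) i with hji | hji
  · obtain ⟨k, rfl⟩ : ∃ k', k = k' + 1 := ⟨k - 1, by omega⟩
    rw [K'.ds_lt k j i hji hi, K.ds_lt k j i hji hi, ih k (by omega) (i - 1) (by omega),
      liftApp_comm_d hK k j (by omega)]
  rcases (show (j : ℕ) = i ∨ (j : ℕ) = i + 1 ∨ i + 1 < j by omega) with hji' | hji' | hji'
  · rw [hji', K'.ds_self k i hi, K.ds_self k i hi]
  · rw [hji', K'.ds_succ k i hi, K.ds_succ k i hi]
  · obtain ⟨k, rfl⟩ : ∃ k', k = k' + 1 := ⟨k - 1, by omega⟩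
    rw [K'.ds_gt k j i hji' (by omega), K.ds_gt k j i hji' (by omega), ih k (by omega) i (by omega),
      liftApp_comm_d hK k (j - 1) (by omega)]

noncomputable def lift (hK : K.IsCoskeletal N)
    (g : SkelMap (skelRestrict N K') (skelRestrict N K)) : SMap K' K :=
  ⟨liftApp g.app, liftApp_comm_d hK, liftApp_comm_s hK⟩

theorem restrict_bijective (hK : K.IsCoskeletal N) :
    Function.Bijective (SMap.restrict N : SMap K' K → _) :=
  ⟨hK.restrict_injective, fun g => ⟨hK.lift g,
    SkelMap.ext (funext fun _ => funext fun h => funext fun x => liftApp_of_le g.app h x)⟩⟩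

end IsCoskeletal

/-- Three consecutive levels `m - 1, m, m + 1` of a simplicial set under construction, with the
simplicial identities among them; `s₀` exists only for `m ≥ 1`. -/
structure Window (m : ℕ) : Type 1 where
  X₀ : Type
  X₁ : Type
  X₂ : Type
  d₁ : ℕ → X₁ → X₀
  d₂ : ℕ → X₂ → X₁
  s₀ : 1 ≤ m → ℕ → X₀ → X₁
  s₁ : ℕ → X₁ → X₂
  dd : ∀ i j : ℕ, i < j → j ≤ m + 1 → ∀ x : X₂, d₁ i (d₂ j x) = d₁ (j - 1) (d₂ i x)
  ss : ∀ (hm : 1 ≤ m) (i j : ℕ), i ≤ j → j + 1 ≤ m → ∀ x : X₀,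
    s₁ i (s₀ hm j x) = s₁ (j + 1) (s₀ hm i x)
  ds_lt : ∀ (hm : 1 ≤ m) (i j : ℕ), i < j → j ≤ m → ∀ x : X₁,
    d₂ i (s₁ j x) = s₀ hm (j - 1) (d₁ i x)
  ds_self : ∀ i : ℕ, i ≤ m → ∀ x : X₁, d₂ i (s₁ i x) = x
  ds_succ : ∀ i : ℕ, i ≤ m → ∀ x : X₁, d₂ (i + 1) (s₁ i x) = x
  ds_gt : ∀ (hm : 1 ≤ m) (i j : ℕ), j + 1 < i → i ≤ m + 1 → ∀ x : X₁,
    d₂ i (s₁ j x) = s₀ hm j (d₁ (i - 1) x)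

namespace Window

variable {m : ℕ} (W : Window m)

structure Extension : Type 1 where
  X₃ : Type
  d₃ : ℕ → X₃ → W.X₂
  s₂ : ℕ → W.X₂ → X₃
  dd : ∀ i j : ℕ, i < j → j ≤ m + 2 → ∀ x : X₃, W.d₂ i (d₃ j x) = W.d₂ (j - 1) (d₃ i x)
  ss : ∀ i j : ℕ, i ≤ j → j ≤ m → ∀ x : W.X₁, s₂ i (W.s₁ j x) = s₂ (j + 1) (W.s₁ i x)
  ds_lt : ∀ i j : ℕ, i < j → j ≤ m + 1 → ∀ x : W.X₂, d₃ i (s₂ j x) = W.s₁ (j - 1) (W.d₂ i x)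
  ds_self : ∀ i : ℕ, i ≤ m + 1 → ∀ x : W.X₂, d₃ i (s₂ i x) = x
  ds_succ : ∀ i : ℕ, i ≤ m + 1 → ∀ x : W.X₂, d₃ (i + 1) (s₂ i x) = x
  ds_gt : ∀ i j : ℕ, j + 1 < i → i ≤ m + 2 → ∀ x : W.X₂, d₃ i (s₂ j x) = W.s₁ j (W.d₂ (i - 1) x)

def shift (E : W.Extension) : Window (m + 1) where
  X₀ := W.X₁
  X₁ := W.X₂
  X₂ := E.X₃
  d₁ := W.d₂
  d₂ := E.d₃
  s₀ _ := W.s₁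
  s₁ := E.s₂
  dd := E.dd
  ss _ i j hij hj := E.ss i j hij (by omega)
  ds_lt _ := E.ds_lt
  ds_self := E.ds_self
  ds_succ := E.ds_succ
  ds_gt _ := E.ds_gt

def IsCycle₁ : ∀ {m : ℕ}, (W : Window m) → (Fin (m + 2) → W.X₁) → Prop
  | 0, _, _ => True
  | _ + 1, W, c => ∀ a b : Fin _, (a : ℕ) < b → W.d₁ a (c b) = W.d₁ (b - 1) (c a)

def IsCycle₂ (c : Fin (m + 3) → W.X₂) : Prop :=
  ∀ a b : Fin (m + 3), (a : ℕ) < b → W.d₂ a (c b) = W.d₂ (b - 1) (c a)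

def Cycle : Type := {c : Fin (m + 3) → W.X₂ // W.IsCycle₂ c}

/-- The boundary of the degeneracy `s_i x`, as dictated by the simplicial identities. -/
def degenTuple (i : ℕ) (x : W.X₂) (a : ℕ) : W.X₂ :=
  if a < i then W.s₁ (i - 1) (W.d₂ a x)
  else if a ≤ i + 1 then x
  else W.s₁ i (W.d₂ (a - 1) x)

variable {W}

lemma degenTuple_of_lt {i a : ℕ} (x : W.X₂) (h : a < i) :
    W.degenTuple i x a = W.s₁ (i - 1) (W.d₂ a x) :=
  if_pos h

lemma degenTuple_of_le_of_le {i a : ℕ} (x : W.X₂) (h₁ : i ≤ a) (h₂ : a ≤ i + 1) :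
    W.degenTuple i x a = x := by
  rw [degenTuple, if_neg (by omega), if_pos h₂]

lemma degenTuple_of_gt {i a : ℕ} (x : W.X₂) (h : i + 1 < a) :
    W.degenTuple i x a = W.s₁ i (W.d₂ (a - 1) x) := by
  rw [degenTuple, if_neg (by omega), if_neg (by omega)]

lemma d₂_degenTuple {i : ℕ} (hi : i ≤ m + 1) (x : W.X₂) {a b : ℕ} (hab : a < b) (hb : b ≤ m + 2) :
    W.d₂ a (W.degenTuple i x b) = W.d₂ (b - 1) (W.degenTuple i x a) := by
  rcases lt_or_ge b i with hbi | hbi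
  · have hm : 1 ≤ m := by omega
    rw [degenTuple_of_lt x hbi, degenTuple_of_lt x (by omega),
      W.ds_lt hm a (i - 1) (by omega) (by omega), W.ds_lt hm (b - 1) (i - 1) (by omega) (by omega),
      W.dd a b hab (by omega)]
  rcases le_or_gt b (i + 1) with hbi' | hbi'
  · rw [degenTuple_of_le_of_le x hbi hbi']
    rcases lt_or_ge a i with hai | hai
    · rw [degenTuple_of_lt x hai]
      rcases (show b = i ∨ b = i + 1 by omega) with rfl | rfl
      · rw [W.ds_self (b - 1) (by omega)]
      · obtain ⟨i, rfl⟩ : ∃ i', i = i' + 1 := ⟨i - 1, by omega⟩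
        simp only [Nat.add_sub_cancel]
        rw [W.ds_succ i (by omega)]
    · rw [degenTuple_of_le_of_le x hai (by omega), show b - 1 = a by omega]
  rw [degenTuple_of_gt x hbi']
  rcases lt_or_ge a i with hai | hai
  · have hm : 1 ≤ m := by omega
    rw [degenTuple_of_lt x hai, W.ds_lt hm a i hai (by omega),
      W.ds_gt hm (b - 1) (i - 1) (by omega) (by omega), W.dd a (b - 1) (by omega) (by omega)]
  rcases le_or_gt a (i + 1) with hai' | hai'
  · rw [degenTuple_of_le_of_le x hai hai']
    rcases (show a = i ∨ a = i + 1 by omega) with rfl | rfl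
    · rw [W.ds_self a (by omega)]
    · rw [W.ds_succ i (by omega)]
  · have hm : 1 ≤ m := by omega
    rw [degenTuple_of_gt x hai', W.ds_gt hm a i (by omega) (by omega),
      W.ds_gt hm (b - 1) i (by omega) (by omega), W.dd (a - 1) (b - 1) (by omega) (by omega)]

lemma degenTuple_s₁ {i j : ℕ} (hij : i ≤ j) (hj : j ≤ m) (x : W.X₁) {a : ℕ} (ha : a ≤ m + 2) :
    W.degenTuple i (W.s₁ j x) a = W.degenTuple (j + 1) (W.s₁ i x) a := by
  rcases lt_or_ge a i with hai | hai
  · have hm : 1 ≤ m := by omega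
    rw [degenTuple_of_lt _ hai, degenTuple_of_lt _ (show a < j + 1 by omega), Nat.add_sub_cancel,
      W.ds_lt hm a j (by omega) hj, W.ds_lt hm a i hai (by omega),
      W.ss hm (i - 1) (j - 1) (by omega) (by omega), Nat.sub_add_cancel (show 1 ≤ j by omega)]
  rcases le_or_gt a (i + 1) with hai' | hai'
  · rw [degenTuple_of_le_of_le _ hai hai']
    rcases lt_or_ge a (j + 1) with haj | haj
    · rw [degenTuple_of_lt _ haj, Nat.add_sub_cancel]
      rcases (show a = i ∨ a = i + 1 by omega) with rfl | rfl
      · rw [W.ds_self a (by omega)]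
      · rw [W.ds_succ i (by omega)]
    · rw [degenTuple_of_le_of_le _ haj (by omega), show i = j by omega]
  rw [degenTuple_of_gt _ hai']
  rcases lt_or_ge a (j + 1) with haj | haj
  · have hm : 1 ≤ m := by omega
    rw [degenTuple_of_lt _ haj, Nat.add_sub_cancel, W.ds_lt hm (a - 1) j (by omega) hj,
      W.ds_gt hm a i hai' (by omega), W.ss hm i (j - 1) (by omega) (by omega),
      Nat.sub_add_cancel (show 1 ≤ j by omega)]
  rcases le_or_gt a (j + 2) with haj' | haj'
  · rw [degenTuple_of_le_of_le _ haj haj']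
    rcases (show a - 1 = j ∨ a - 1 = j + 1 by omega) with h | h
    · rw [h, W.ds_self j hj]
    · rw [h, W.ds_succ j hj]
  · have hm : 1 ≤ m := by omega
    rw [degenTuple_of_gt _ haj', W.ds_gt hm (a - 1) j (by omega) (by omega),
      W.ds_gt hm (a - 1) i (by omega) (by omega), W.ss hm i j hij (by omega)]

variable (W)

def degenCycle (i : ℕ) (hi : i ≤ m + 1) (x : W.X₂) : W.Cycle :=
  ⟨fun a => W.degenTuple i x a, fun _ b hab => d₂_degenTuple hi x hab (by omega)⟩

def cycleExtension : W.Extension where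
  X₃ := W.Cycle
  d₃ i c := c.1 ⟨min i (m + 2), by omega⟩
  s₂ i x := W.degenCycle (min i (m + 1)) (min_le_right _ _) x
  dd i j hij hj c := by
    simp only [min_eq_left hj, min_eq_left (show i ≤ m + 2 by omega)]
    exact c.2 ⟨i, by omega⟩ ⟨j, by omega⟩ hij
  ss i j hij hj x := by
    apply Subtype.ext
    funext a
    simp only [degenCycle, min_eq_left (show i ≤ m + 1 by omega),
      min_eq_left (show j + 1 ≤ m + 1 by omega)]
    exact degenTuple_s₁ hij hj x (by omega)
  ds_lt i j hij hj x := by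
    simp only [degenCycle, min_eq_left hj, min_eq_left (show i ≤ m + 2 by omega)]
    exact degenTuple_of_lt x hij
  ds_self i hi x := by
    simp only [degenCycle, min_eq_left hi, min_eq_left (show i ≤ m + 2 by omega)]
    exact degenTuple_of_le_of_le x le_rfl (by omega)
  ds_succ i hi x := by
    simp only [degenCycle, min_eq_left hi, min_eq_left (show i + 1 ≤ m + 2 by omega)]
    exact degenTuple_of_le_of_le x (by omega) le_rfl
  ds_gt i j hji hi x := by
    simp only [degenCycle, min_eq_left hi, min_eq_left (show j ≤ m + 1 by omega)]
    exact degenTuple_of_gt x hji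

lemma cycleExtension_existsUnique (c : Fin (m + 3) → W.X₂) (hc : W.IsCycle₂ c) :
    ∃! x : W.cycleExtension.X₃, ∀ i : Fin (m + 3), W.cycleExtension.d₃ i x = c i := by
  have hd₃ : ∀ (x : W.Cycle) (i : Fin (m + 3)), W.cycleExtension.d₃ i x = x.1 i := fun x i =>
    congrArg x.1 (Fin.ext (min_eq_left (by omega)))
  exact ⟨⟨c, hc⟩, hd₃ ⟨c, hc⟩, fun y hy =>
    Subtype.ext (funext fun i => (hd₃ y i).symm.trans (hy i))⟩

end Window

end SSetC

namespace SkelC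

open SSetC

variable {N : ℕ} (S : SkelC N)

structure TopLevel {m : ℕ} (W : Window m) (e₂ : m + 1 ≤ N → (W.X₂ ≃ S.obj (m + 1))) :
    Type 1 where
  E : W.Extension
  e₃ : m + 2 ≤ N → (E.X₃ ≃ S.obj (m + 2))
  e_d : ∀ (h : m + 2 ≤ N) (i : ℕ), i ≤ m + 2 → ∀ x : E.X₃,
    e₂ (Nat.le_of_succ_le h) (E.d₃ i x) = S.d (m + 1) h i (e₃ h x)
  e_s : ∀ (h : m + 2 ≤ N) (i : ℕ), i ≤ m + 1 → ∀ x : W.X₂,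
    e₃ h (E.s₂ i x) = S.s (m + 1) h i (e₂ (Nat.le_of_succ_le h) x)
  fill : N ≤ m + 1 → ∀ c : Fin (m + 3) → W.X₂, W.IsCycle₂ c →
    ∃! x : E.X₃, ∀ i : Fin (m + 3), E.d₃ i x = c i

structure Stage (m : ℕ) : Type 1 where
  W : Window m
  e₁ : m ≤ N → (W.X₁ ≃ S.obj m)
  e₂ : m + 1 ≤ N → (W.X₂ ≃ S.obj (m + 1))
  e_d : ∀ (h : m + 1 ≤ N) (i : ℕ), i ≤ m + 1 → ∀ x : W.X₂,
    e₁ (Nat.le_of_succ_le h) (W.d₂ i x) = S.d m h i (e₂ h x)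
  e_s : ∀ (h : m + 1 ≤ N) (i : ℕ), i ≤ m → ∀ x : W.X₁,
    e₂ h (W.s₁ i x) = S.s m h i (e₁ (Nat.le_of_succ_le h) x)
  fill : N ≤ m → ∀ c : Fin (m + 2) → W.X₁, W.IsCycle₁ c →
    ∃! x : W.X₂, ∀ i : Fin (m + 2), W.d₂ i x = c i

namespace Stage

variable {S} {m : ℕ} (p : Stage S m)

def skelTop (h₂ : m + 2 ≤ N) : TopLevel S p.W p.e₂ :=
  have h₁ := Nat.le_of_succ_le h₂
  have h₀ := Nat.le_of_succ_le h₁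
  { E :=
      { X₃ := S.obj (m + 2)
        d₃ i x := (p.e₂ h₁).symm (S.d (m + 1) h₂ i x)
        s₂ i x := S.s (m + 1) h₂ i (p.e₂ h₁ x)
        dd i j hij hj x := (p.e₁ h₀).injective <| by
          rw [p.e_d h₁ i (by omega), p.e_d h₁ (j - 1) (by omega), Equiv.apply_symm_apply,
            Equiv.apply_symm_apply, S.dd m h₂ i j hij hj x]
        ss i j hij hj x := by
          rw [p.e_s h₁ j hj, p.e_s h₁ i (hij.trans hj), S.ss m h₂ i j hij hj]
        ds_lt i j hij hj x := (p.e₂ h₁).injective <| by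
          rw [Equiv.apply_symm_apply, S.ds_lt m h₂ i j hij hj, p.e_s h₁ (j - 1) (by omega),
            p.e_d h₁ i (by omega)]
        ds_self i hi x := by
          rw [S.ds_self (m + 1) h₂ i hi, Equiv.symm_apply_apply]
        ds_succ i hi x := by
          rw [S.ds_succ (m + 1) h₂ i hi, Equiv.symm_apply_apply]
        ds_gt i j hji hi x := (p.e₂ h₁).injective <| by
          rw [Equiv.apply_symm_apply, S.ds_gt m h₂ i j hji hi, p.e_s h₁ j (by omega),
            p.e_d h₁ (i - 1) (by omega)] }
    e₃ _ := Equiv.refl _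
    e_d _ _ _ _ := Equiv.apply_symm_apply _ _
    e_s _ _ _ _ := rfl
    fill h := absurd h (by omega) }

def cycleTop (h₂ : ¬m + 2 ≤ N) : TopLevel S p.W p.e₂ where
  E := p.W.cycleExtension
  e₃ h := absurd h h₂
  e_d h := absurd h h₂
  e_s h := absurd h h₂
  fill _ := p.W.cycleExtension_existsUnique

def top : TopLevel S p.W p.e₂ :=
  if h₂ : m + 2 ≤ N then p.skelTop h₂ else p.cycleTop h₂

def next : Stage S (m + 1) where
  W := p.W.shift p.top.E
  e₁ := p.e₂
  e₂ := p.top.e₃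
  e_d := p.top.e_d
  e_s := p.top.e_s
  fill := p.top.fill

end Stage

def Stage.initOfPos (h₁ : 1 ≤ N) : Stage S 0 where
  W :=
    { X₀ := PUnit
      X₁ := S.obj 0
      X₂ := S.obj 1
      d₁ _ _ := PUnit.unit
      d₂ := S.d 0 h₁
      s₀ h := absurd h (by omega)
      s₁ := S.s 0 h₁
      dd _ _ _ _ _ := rfl
      ss h := absurd h (by omega)
      ds_lt h := absurd h (by omega)
      ds_self := S.ds_self 0 h₁
      ds_succ := S.ds_succ 0 h₁
      ds_gt h := absurd h (by omega) }
  e₁ _ := Equiv.refl _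
  e₂ _ := Equiv.refl _
  e_d _ _ _ _ := rfl
  e_s _ _ _ _ := rfl
  fill h := absurd h (by omega)

/-- For `N = 0` the `1`-simplices are the `0`-cycles, i.e. all pairs of vertices. -/
def Stage.initOfZero (h₀ : N = 0) : Stage S 0 where
  W :=
    { X₀ := PUnit
      X₁ := S.obj 0
      X₂ := Fin 2 → S.obj 0
      d₁ _ _ := PUnit.unit
      d₂ i c := c ⟨min i 1, by omega⟩
      s₀ h := absurd h (by omega)
      s₁ _ x _ := x
      dd _ _ _ _ _ := rfl
      ss h := absurd h (by omega)
      ds_lt h := absurd h (by omega)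
      ds_self _ _ _ := rfl
      ds_succ _ _ _ := rfl
      ds_gt h := absurd h (by omega) }
  e₁ _ := Equiv.refl _
  e₂ h := absurd h (by omega)
  e_d h := absurd h (by omega)
  e_s h := absurd h (by omega)
  fill _ c _ := ⟨c, fun i => congrArg c (Fin.ext (by simp; omega)),
    fun y hy => funext fun i => (congrArg y (Fin.ext (by simp; omega))).trans (hy i)⟩

def stage : ∀ m, Stage S m
  | 0 => if h₁ : 1 ≤ N then Stage.initOfPos S h₁ else Stage.initOfZero S (by omega)
  | m + 1 => (stage m).next

def completion : SSetC where
  obj m := (S.stage m).W.X₁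
  d m i x := (S.stage m).W.d₂ i x
  s m i x := (S.stage m).W.s₁ i x
  dd n i j hij hj x := (S.stage (n + 1)).W.dd i j hij hj x
  ss n i j hij hj x := (S.stage (n + 1)).W.ss (by omega) i j hij (by omega) x
  ds_lt n i j hij hj x := (S.stage (n + 1)).W.ds_lt (by omega) i j hij hj x
  ds_self n i hi x := (S.stage n).W.ds_self i hi x
  ds_succ n i hi x := (S.stage n).W.ds_succ i hi x
  ds_gt n i j hji hi x := (S.stage (n + 1)).W.ds_gt (by omega) i j hji hi x

def completionEquiv (k : ℕ) (h : k ≤ N) : S.completion.obj k ≃ S.obj k :=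
  (S.stage k).e₁ h

lemma completionEquiv_d (k : ℕ) (h : k + 1 ≤ N) (i : ℕ) (hi : i ≤ k + 1)
    (x : S.completion.obj (k + 1)) :
    S.completionEquiv k (Nat.le_of_succ_le h) (S.completion.d k i x) =
      S.d k h i (S.completionEquiv (k + 1) h x) :=
  (S.stage k).e_d h i hi x

lemma completionEquiv_s (k : ℕ) (h : k + 1 ≤ N) (i : ℕ) (hi : i ≤ k) (x : S.completion.obj k) :
    S.completionEquiv (k + 1) h (S.completion.s k i x) =
      S.s k h i (S.completionEquiv k (Nat.le_of_succ_le h) x) :=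
  (S.stage k).e_s h i hi x

theorem completion_isCoskeletal : S.completion.IsCoskeletal N := by
  intro k hk c hc
  obtain ⟨x, hx, hu⟩ := (S.stage k).fill hk c (by cases k <;> exact hc)
  exact ⟨x, funext hx, fun y hy => hu y (congrFun hy)⟩

def toCompletion : SkelMap S (skelRestrict N S.completion) where
  app k h := (S.completionEquiv k h).symm
  comm_d k h i hi x := (S.completionEquiv k _).injective <| by
    change _ = S.completionEquiv k _ (S.completion.d k i _)
    rw [Equiv.apply_symm_apply, S.completionEquiv_d k h i hi, Equiv.apply_symm_apply]
  comm_s k h i hi x := (S.completionEquiv (k + 1) h).injective <| by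
    change _ = S.completionEquiv (k + 1) h (S.completion.s k i _)
    rw [Equiv.apply_symm_apply, S.completionEquiv_s k h i hi, Equiv.apply_symm_apply]

def ofCompletion : SkelMap (skelRestrict N S.completion) S where
  app k h x := S.completionEquiv k h x
  comm_d := S.completionEquiv_d
  comm_s := S.completionEquiv_s

end SkelC

open SSetC SkelC in
/-- Every simplicial `N`-skeleton `S` has a canonical completion
`Ŝ`: a simplicial set agreeing with `S` up to dimension `N` in which, in every
dimension `k + 1 > N`, the simplices correspond bijectively to the `k`-cycles via
their boundaries (i.e. every cycle has a unique filling).  Moreover: (1) if `S`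
has the Kan property then `Ŝ` is a Kan complex and `π_k(Ŝ, ⋆) = 0` for all
`k ≥ N` and every base point; (2) if `S` is minimal then so is `Ŝ`; (3) the
completion is right-adjoint to the restriction `R_N`: for every simplicial set
`K'` there is a (natural) bijection `Hom_sSet(K', Ŝ) ≅ Hom_sSk(R_N K', S)` given
by restricting and applying the identification of `Ŝ` with `S` in dimensions
`≤ N`. -/
theorem skeleton_completion (N : ℕ) (S : SkelC N) :
    ∃ (Kc : SSetC) (e : ∀ k, k ≤ N → (Kc.obj k ≃ S.obj k)),
      (∀ (k : ℕ) (h : k + 1 ≤ N) (i : ℕ), i ≤ k + 1 → ∀ x : Kc.obj (k + 1),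
        e k (Nat.le_of_succ_le h) (Kc.d k i x) = S.d k h i (e (k + 1) h x)) ∧
      (∀ (k : ℕ) (h : k + 1 ≤ N) (i : ℕ), i ≤ k → ∀ x : Kc.obj k,
        e (k + 1) h (Kc.s k i x) = S.s k h i (e k (Nat.le_of_succ_le h) x)) ∧
      (∀ k : ℕ, N ≤ k → ∀ c : Fin (k + 2) → Kc.obj k, Kc.Compat c →
        ∃! x : Kc.obj (k + 1), Kc.bdry x = c) ∧
      (S.SkelIsKan → Kc.IsKan ∧
        (∀ b : Kc.obj 0,
          (N = 0 → ∀ x : Kc.obj 0, Kc.Homotopic x (Kc.basept b 0)) ∧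
          (∀ k : ℕ, N ≤ k + 1 → ∀ x : Kc.obj (k + 1),
            Kc.IsSph b x → Kc.Homotopic x (Kc.basept b (k + 1))))) ∧
      (S.SkelMinimal → Kc.Minimal) ∧
      (∀ K' : SSetC, ∃ bij : SMap K' Kc ≃ SkelMap (skelRestrict N K') S,
        ∀ (f : SMap K' Kc) (k : ℕ) (h : k ≤ N) (x : K'.obj k),
          (bij f).app k h x = e k h (f.app k x)) := by
  have hK := S.completion_isCoskeletal
  have hto : ∀ k h x, S.toCompletion.app k h (S.ofCompletion.app k h x) = x :=
    fun k h => (S.completionEquiv k h).symm_apply_apply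
  have hof : ∀ k h x, S.ofCompletion.app k h (S.toCompletion.app k h x) = x :=
    fun k h => (S.completionEquiv k h).apply_symm_apply
  refine ⟨S.completion, S.completionEquiv, S.completionEquiv_d, S.completionEquiv_s, hK,
    fun hS => ⟨hK.isKan (hS.of_retract S.ofCompletion S.toCompletion hto), fun b =>
      ⟨fun h₀ x => (hK 0 h₀.le _ trivial).exists,
        fun k hk x hx => homotopic_basept_of_isSph (fun c hc => (hK (k + 1) hk c hc).exists) hx⟩⟩,
    fun hS => hK.minimal
      (hS.of_injective S.ofCompletion fun k h => (S.completionEquiv k h).injective),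
    fun K' => ⟨Equiv.ofBijective _
      ((SkelMap.comp_bijective S.ofCompletion S.toCompletion hto hof).comp
        hK.restrict_bijective), fun _ _ _ _ => rfl⟩⟩
end
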